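/- arXiv:1909.06223 — 9 statements merged into one kernel-verified Lean document; each statement's English description precedes it below -/
import Mathlib

section
/- Let N be a composite number, let p be the smallest prime divisor of N, and let H be a subgroup of (ℤ/Nℤ)^× of order at least p. Then the semidirect product G = ℤ_N ⋊ H is irreducibly spark deficient: every irreducible unitary representation of G of dimension greater than 1 is spark deficient. -/
/-! Let `T` be the image of the generator `1 ∈ ℤ/Nℤ` and `u` an eigenvector of `T` with
eigenvalue `ζ`, so `ζ ^ N = 1`. Since `a ∈ H` conjugates `1` to `a⁻¹`, each `π(a) u` is an
eigenvector of `T` with eigenvalue `ζ ^ a⁻¹`, and by irreducibility these `|H|` vectors span `V`.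
If `ζ` has order `r < N`, then `T ^ r = 1`, so the distinct group elements `r` and `0` give the
same vector `π(g) v`. If `ζ` is a primitive `N`-th root of unity, the eigenvalues `ζ ^ a⁻¹` are
distinct, so `dim V = |H| ≥ p`; and with `M = N / p` every `(ζ ^ a⁻¹) ^ M` is a primitive `p`-th
root of unity, so `∑_{i<p} T ^ (M i) = 0`: the `p ≤ dim V` vectors `π(M i) v` are dependent. -/

open scoped InnerProductSpace

/-- A family of vectors in a complex vector space is *full spark* if every subfamily
of size `Module.finrank ℂ V` (the dimension of the space) is linearly independent. -/
def IsFullSpark {ι V : Type*} [AddCommGroup V] [Module ℂ V] (v : ι → V) : Prop :=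
  ∀ s : Finset ι, s.card = Module.finrank ℂ V →
    LinearIndependent ℂ (fun i : s => v (i : ι))

/-- The action of a subgroup `H` of `(ℤ/Nℤ)ˣ` on `ℤ/Nℤ` (written multiplicatively),
used to form the semidirect product `ℤ_N ⋊ H` with multiplication
`(x,a)(y,b) = (x + a·y, a·b)`. -/
def zmodAut (N : ℕ) (H : Subgroup (ZMod N)ˣ) :
    H →* MulAut (Multiplicative (ZMod N)) where
  toFun a := AddEquiv.toMultiplicative
    ((DistribMulAction.toAddAut (ZMod N)ˣ (ZMod N)) (a : (ZMod N)ˣ))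
  map_one' := by ext x; simp
  map_mul' a b := by ext x; simp [mul_smul]

open Module SemidirectProduct Multiplicative

instance SemidirectProduct.instFinite {N G : Type*} [Group N] [Group G] {φ : G →* MulAut N}
    [Finite N] [Finite G] : Finite (N ⋊[φ] G) :=
  .of_equiv _ equivProd.symm

section FullSpark

variable {ι V : Type*} [AddCommGroup V] [Module ℂ V] {w : ι → V}

theorem IsFullSpark.linearIndependent_of_card_le [Finite ι] (hw : IsFullSpark w)
    {s : Finset ι} (hs : s.card ≤ finrank ℂ V) (hι : finrank ℂ V ≤ Nat.card ι) :
    LinearIndependent ℂ (fun i : s => w i) := by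
  have := Fintype.ofFinite ι
  obtain ⟨t, hst, -, ht⟩ := Finset.exists_subsuperset_card_eq (Finset.subset_univ s) hs
    (by simpa [Nat.card_eq_fintype_card] using hι)
  exact LinearIndepOn.mono (s := (t : Set ι)) (hw t ht) (Finset.coe_subset.mpr hst)

theorem IsFullSpark.injective [Finite ι] (hw : IsFullSpark w) (hV : 1 < finrank ℂ V)
    (hι : finrank ℂ V ≤ Nat.card ι) : Function.Injective w := by
  classical
  intro i j hij
  by_contra hne
  have hli := hw.linearIndependent_of_card_le (s := {i, j})
    (by rw [Finset.card_pair hne]; exact hV) hι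
  exact hne congr($(hli.injective (a₁ := ⟨i, by simp⟩) (a₂ := ⟨j, by simp⟩) hij).val)

theorem IsFullSpark.sum_ne_zero [Finite ι] (hw : IsFullSpark w) {s : Finset ι}
    (hne : s.Nonempty) (hs : s.card ≤ finrank ℂ V) (hι : finrank ℂ V ≤ Nat.card ι) :
    ∑ i ∈ s, w i ≠ 0 := by
  intro hsum
  obtain ⟨i, hi⟩ := hne
  have hli := Fintype.linearIndependent_iff.mp (hw.linearIndependent_of_card_le hs hι)
  exact one_ne_zero <|
    hli (fun _ => 1) (by simpa only [one_smul, Finset.sum_coe_sort] using hsum) ⟨i, hi⟩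

theorem IsFullSpark.sum_range_pow_ne_zero [Monoid ι] [Finite ι] (hw : IsFullSpark w) (g : ι)
    {k : ℕ} (hk₀ : 0 < k) (hkg : k ≤ orderOf g) (hk : k ≤ finrank ℂ V)
    (hι : finrank ℂ V ≤ Nat.card ι) :
    ∑ i ∈ Finset.range k, w (g ^ i) ≠ 0 := by
  classical
  have hinj : Set.InjOn (g ^ ·) (Finset.range k) := pow_injOn_Iio_orderOf.mono fun i hi =>
    (Finset.mem_range.mp hi).trans_le hkg
  rw [← Finset.sum_image hinj]
  exact hw.sum_ne_zero ((Finset.nonempty_range_iff.mpr hk₀.ne').image _)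
    (Finset.card_image_le.trans ((Finset.card_range k).trans_le hk)) hι

end FullSpark

namespace SemidirectProduct

variable {N H R V : Type*} [Group N] [Group H] {φ : H →* MulAut N} [Semiring R]
  [AddCommMonoid V] [Module R V] (π : N ⋊[φ] H →* Module.End R V) {u : V} {χ : N → R}

theorem apply_inl_apply_inr (hu : ∀ n, π (inl n) u = χ n • u) (n : N) (h : H) :
    π (inl n) (π (inr h) u) = χ (φ h⁻¹ n) • π (inr h) u := by
  have hcomm : inl n * inr h = inr h * (inl (φ h⁻¹ n) : N ⋊[φ] H) := by
    rw [map_inv, inl_aut_inv, ← mul_assoc, ← mul_assoc, ← map_mul, mul_inv_cancel, map_one,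
      one_mul]
  rw [← Module.End.mul_apply, ← map_mul, hcomm, map_mul, Module.End.mul_apply, hu, map_smul]

theorem span_range_apply_inr_eq_top (hu : ∀ n, π (inl n) u = χ n • u) (hu₀ : u ≠ 0)
    (hirred : ∀ U : Submodule R V, (∀ g, U.map (π g) ≤ U) → U = ⊥ ∨ U = ⊤) :
    Submodule.span R (Set.range fun h => π (inr h) u) = ⊤ := by
  refine (hirred _ fun g => ?_).resolve_left fun hbot => hu₀ ?_
  · rw [Submodule.map_span, Submodule.span_le]
    rintro _ ⟨_, ⟨h, rfl⟩, rfl⟩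
    rw [← Module.End.mul_apply, ← map_mul, ← inl_left_mul_inr_right g, mul_assoc, ← map_mul inr,
      map_mul, Module.End.mul_apply, apply_inl_apply_inr π hu]
    exact Submodule.smul_mem _ _ (Submodule.subset_span ⟨_, rfl⟩)
  · have h₁ := Submodule.subset_span (R := R) (Set.mem_range_self (f := fun h => π (inr h) u) 1)
    simpa [hbot] using h₁

end SemidirectProduct

theorem Module.End.HasEigenvector.pow_eq_one {K V : Type*} [Field K] [AddCommGroup V]
    [Module K V] {f : Module.End K V} {μ : K} {x : V} (hx : f.HasEigenvector μ x) {n : ℕ}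
    (hf : f ^ n = 1) : μ ^ n = 1 :=
  smul_left_injective K hx.2 (by simpa [hf] using (hx.pow_apply n).symm)

theorem ZMod.addOrderOf_natCast_div {N p : ℕ} (hN : N ≠ 0) (hp : p ∣ N) :
    addOrderOf ((N / p : ℕ) : ZMod N) = p := by
  rw [ZMod.addOrderOf_coe _ hN, Nat.gcd_eq_right (Nat.div_dvd_of_dvd hp), Nat.div_div_self hp hN]

namespace zmodAut

variable {N : ℕ} {H : Subgroup (ZMod N)ˣ} {V : Type*} [AddCommGroup V] [Module ℂ V]
  (π : Multiplicative (ZMod N) ⋊[zmodAut N H] H →* Module.End ℂ V)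

theorem map_inl_ofAdd_natCast (m : ℕ) :
    π (inl (ofAdd (m : ZMod N))) = π (inl (ofAdd 1)) ^ m := by
  rw [← map_pow, ← map_pow, ← ofAdd_nsmul, nsmul_one]

theorem inl_ofAdd_natCast_ne_one {r : ℕ} (hr : r ∣ N) (hrN : r ≠ N) :
    (inl (ofAdd (r : ZMod N)) : Multiplicative (ZMod N) ⋊[zmodAut N H] H) ≠ 1 := by
  rw [Ne, ← map_one inl, inl_inj, ← ofAdd_zero, ofAdd.injective.eq_iff, ZMod.natCast_eq_zero_iff]
  exact fun hNr => hrN (Nat.dvd_antisymm hr hNr)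

theorem map_inl_ofAdd [NeZero N] (x : ZMod N) :
    π (inl (ofAdd x)) = π (inl (ofAdd 1)) ^ x.val := by
  rw [← map_inl_ofAdd_natCast, ZMod.natCast_zmod_val]

variable {π} {ζ : ℂ} {u : V}

theorem pow_eq_one_of_hasEigenvector (hu : (π (inl (ofAdd 1))).HasEigenvector ζ u) :
    ζ ^ N = 1 :=
  hu.pow_eq_one <| by
    rw [← map_inl_ofAdd_natCast, ZMod.natCast_self, ofAdd_zero, map_one, map_one]

theorem finrank_le_natCard (hspan : Submodule.span ℂ (Set.range fun a => π (inr a) u) = ⊤)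
    [Finite H] : finrank ℂ V ≤ Nat.card H := by
  have := Fintype.ofFinite H
  exact (finrank_le_of_span_eq_top hspan).trans_eq Nat.card_eq_fintype_card.symm

theorem map_inl_apply_of_hasEigenvector [NeZero N] (hu : (π (inl (ofAdd 1))).HasEigenvector ζ u)
    (x : Multiplicative (ZMod N)) : π (inl x) u = ζ ^ x.toAdd.val • u := by
  conv_lhs => rw [← ofAdd_toAdd x, map_inl_ofAdd, hu.pow_apply]

theorem hasEigenvector_apply_inr [NeZero N] (hu : (π (inl (ofAdd 1))).HasEigenvector ζ u)
    (a : H) :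
    (π (inl (ofAdd 1))).HasEigenvector (ζ ^ ((a⁻¹ : (ZMod N)ˣ) : ZMod N).val) (π (inr a) u) := by
  refine ⟨Module.End.mem_eigenspace_iff.mpr ?_, fun h => hu.2 ?_⟩
  · rw [apply_inl_apply_inr π (map_inl_apply_of_hasEigenvector hu)]
    simp [zmodAut, Units.smul_def]
  · simpa [← Module.End.mul_apply, ← map_mul] using congrArg (π (inr a⁻¹)) h

theorem map_inl_ofAdd_orderOf [NeZero N] (hu : (π (inl (ofAdd 1))).HasEigenvector ζ u)
    (hspan : Submodule.span ℂ (Set.range fun a => π (inr a) u) = ⊤) :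
    π (inl (ofAdd (orderOf ζ : ZMod N))) = 1 := by
  refine LinearMap.ext_on_range hspan fun a => ?_
  rw [map_inl_ofAdd_natCast, (hasEigenvector_apply_inr hu a).pow_apply, ← pow_mul, mul_comm,
    pow_mul, pow_orderOf_eq_one, one_pow, one_smul, Module.End.one_apply]

theorem card_le_finrank_of_isPrimitiveRoot [NeZero N] [FiniteDimensional ℂ V]
    (hu : (π (inl (ofAdd 1))).HasEigenvector ζ u) (hζ : IsPrimitiveRoot ζ N) :
    Nat.card H ≤ finrank ℂ V := by
  have hinj : Function.Injective fun a : H => ζ ^ ((a⁻¹ : (ZMod N)ˣ) : ZMod N).val :=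
    fun a b hab => Subtype.ext <| inv_injective <| Units.ext <| ZMod.val_injective N <|
      hζ.pow_inj (ZMod.val_lt _) (ZMod.val_lt _) hab
  have := Fintype.ofFinite H
  rw [Nat.card_eq_fintype_card]
  exact (Module.End.eigenvectors_linearIndependent' _ _ hinj _
    (hasEigenvector_apply_inr hu)).fintype_card_le_finrank

theorem sum_range_pow_map_inl_eq_zero [NeZero N] (hu : (π (inl (ofAdd 1))).HasEigenvector ζ u)
    (hspan : Submodule.span ℂ (Set.range fun a => π (inr a) u) = ⊤) (hζ : IsPrimitiveRoot ζ N)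
    {M p : ℕ} (hp : 1 < p) (hMp : N = M * p) :
    ∑ i ∈ Finset.range p, π (inl (ofAdd (M : ZMod N))) ^ i = 0 := by
  refine LinearMap.ext_on_range hspan fun a => ?_
  have hroot : IsPrimitiveRoot ((ζ ^ ((a⁻¹ : (ZMod N)ˣ) : ZMod N).val) ^ M) p :=
    (hζ.pow_of_coprime _ (ZMod.val_coe_unit_coprime _)).pow (NeZero.pos N) hMp
  simp_rw [LinearMap.sum_apply, map_inl_ofAdd_natCast, ← pow_mul,
    (hasEigenvector_apply_inr hu a).pow_apply, pow_mul, ← Finset.sum_smul,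
    hroot.geom_sum_eq_zero hp, zero_smul, LinearMap.zero_apply]

end zmodAut

open zmodAut

theorem irreduciblySparkDeficient_of_composite_general
    (N : ℕ) (hN : 2 ≤ N)
    (H : Subgroup (ZMod N)ˣ) (hH : N.minFac ≤ Nat.card H)
    (V : Type*) [NormedAddCommGroup V] [InnerProductSpace ℂ V] [FiniteDimensional ℂ V]
    (π : (Multiplicative (ZMod N) ⋊[zmodAut N H] H) →* (V →ₗ[ℂ] V))
    (hirred : ∀ U : Submodule ℂ V, (∀ g, U.map (π g) ≤ U) → U = ⊥ ∨ U = ⊤)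
    (hdim : 1 < Module.finrank ℂ V) :
    ∀ v : V,
      ¬ IsFullSpark (fun g : Multiplicative (ZMod N) ⋊[zmodAut N H] H => π g v) := by
  intro v hFS
  have : NeZero N := ⟨by omega⟩
  have : Nontrivial V := Module.nontrivial_of_finrank_pos (R := ℂ) (by omega)
  obtain ⟨ζ, hζ⟩ := Module.End.exists_eigenvalue (π (inl (ofAdd (1 : ZMod N))))
  obtain ⟨u, hu⟩ := hζ.exists_hasEigenvector
  have hspan := span_range_apply_inr_eq_top π (map_inl_apply_of_hasEigenvector hu) hu.2 hirred
  have hG : finrank ℂ V ≤ Nat.card (Multiplicative (ZMod N) ⋊[zmodAut N H] H) :=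
    (finrank_le_natCard hspan).trans (Nat.card_le_card_of_injective _ inr_injective)
  by_cases hord : orderOf ζ = N
  · have hprim := IsPrimitiveRoot.iff_orderOf.mpr hord
    have hp := Nat.minFac_prime (show N ≠ 1 by omega)
    have hsum := sum_range_pow_map_inl_eq_zero hu hspan hprim hp.one_lt
      (Nat.div_mul_cancel N.minFac_dvd).symm
    refine hFS.sum_range_pow_ne_zero (inl (ofAdd ((N / N.minFac : ℕ) : ZMod N))) hp.pos ?_
      (hH.trans (card_le_finrank_of_isPrimitiveRoot hu hprim)) hG ?_
    · rw [orderOf_injective _ inl_injective, orderOf_ofAdd_eq_addOrderOf,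
        ZMod.addOrderOf_natCast_div (by omega) N.minFac_dvd]
    · simp_rw [map_pow, ← LinearMap.sum_apply, hsum, LinearMap.zero_apply]
  · have hr := orderOf_dvd_of_pow_eq_one (pow_eq_one_of_hasEigenvector hu)
    refine inl_ofAdd_natCast_ne_one hr hord (hFS.injective hdim hG ?_)
    change π _ v = π 1 v
    rw [map_inl_ofAdd_orderOf hu hspan, map_one]

/-- For a composite `N` with smallest prime divisor `p = N.minFac`, and
`H ≤ (ℤ/Nℤ)ˣ` of order at least `p`, the semidirect product `ℤ_N ⋊ H` is irreducibly
spark deficient: every irreducible unitary representation of dimension `> 1` is spark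
deficient. -/
theorem irreduciblySparkDeficient_of_composite
    (N : ℕ) (hN : 2 ≤ N) (hNcomp : ¬ N.Prime)
    (H : Subgroup (ZMod N)ˣ) (hH : N.minFac ≤ Nat.card H)
    (V : Type*) [NormedAddCommGroup V] [InnerProductSpace ℂ V] [FiniteDimensional ℂ V]
    (π : (Multiplicative (ZMod N) ⋊[zmodAut N H] H) →* (V →ₗ[ℂ] V))
    (hunitary : ∀ g (v w : V), ⟪π g v, π g w⟫_ℂ = ⟪v, w⟫_ℂ)
    (hirred : ∀ U : Submodule ℂ V, (∀ g, U.map (π g) ≤ U) → U = ⊥ ∨ U = ⊤)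
    (hdim : 1 < Module.finrank ℂ V) :
    ∀ v : V,
      ¬ IsFullSpark (fun g : Multiplicative (ZMod N) ⋊[zmodAut N H] H => π g v) :=
  irreduciblySparkDeficient_of_composite_general N hN H hH V π hirred hdim
end

section
/- Let 𝓜 = (m_{kℓ}) be an N × M complex matrix (rows indexed by ℤ/Nℤ, columns by {0,…,M−1}) with the property that every square submatrix of 𝓜 whose rows are cyclically consecutive (i.e., the row indices form a set {r, r+1, …, r+s} mod N) has nonzero determinant. Then there is an open dense subset S ⊆ ℂ^N such that for every f ∈ S the family of NM vectors {𝓜_ℓ T^k f : 0 ≤ ℓ ≤ M−1, 0 ≤ k ≤ N−1} is full spark, i.e., every N of these vectors are linearly independent. -/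
/-!
For fixed columns `(ℓ c, k c)`, the determinant of the matrix with columns `𝓜_{ℓ c} T^{k c} f`
is a polynomial in `f`; its nonvanishing set is open, and dense as soon as it is nonempty, so it
suffices to find one good `f` for each of the finitely many choices of `N` columns.

Take `f j = z ^ w j`. A permutation in the expansion of the determinant assigns a shift to each
row `r` and contributes `z ^ ∑ r, w (r - shift r)`. Read `ZMod N` cyclically from an origin `t`
given by the cycle lemma, so that some assignment never gives a row a shift lying after it. With
`w d = N² d + d²`, the linear term forces such assignments and the quadratic term, by the
rearrangement inequality, forces the assignment to be sorted. The sorted assignment is unique and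
gives each shift a run of consecutive rows, so the coefficient of its power of `z` is, up to sign,
a product of cyclically consecutive minors of `𝓜`.
-/

open scoped InnerProductSpace

open Finset Polynomial Equiv

namespace ZMod

variable {N : ℕ} [NeZero N]

theorem val_sub_add_val_sub (a b c : ZMod N) :
    (a - b).val + (b - c).val = (a - c).val + if (b - c).val ≤ (a - c).val then 0 else N := by
  have hsum : (a - b) + (b - c) = a - c := by ring
  have := (a - b).val_lt
  rcases lt_or_ge ((a - b).val + (b - c).val) N with h | h
  · have := val_add_of_lt h
    rw [hsum] at this
    rw [if_pos (by omega)]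
    omega
  · have := val_add_val_of_le h
    rw [hsum] at this
    rw [if_neg (by omega)]
    omega

theorem val_sub_injective (t : ZMod N) : Function.Injective fun r : ZMod N => (r - t).val :=
  fun _ _ h => sub_left_inj.1 (val_injective N h)

theorem card_filter_val_sub_lt (t : ZMod N) {m : ℕ} (hm : m ≤ N) :
    #{r | (r - t).val < m} = m := by
  have himage : ({r | (r - t).val < m} : Finset (ZMod N))
      = (range m).image (fun i : ℕ => t + i) := by
    ext r
    simp only [mem_filter, mem_univ, true_and, mem_image, mem_range]
    refine ⟨fun h => ⟨(r - t).val, h, by simp⟩, ?_⟩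
    rintro ⟨i, hi, rfl⟩
    simpa [val_cast_of_lt (hi.trans_le hm)] using hi
  rw [himage, card_image_of_injOn, card_range]
  intro i hi j hj hij
  have hi : i < N := (mem_range.1 hi).trans_le hm
  have hj : j < N := (mem_range.1 hj).trans_le hm
  simpa [val_cast_of_lt hi, val_cast_of_lt hj] using congrArg val (add_left_cancel hij)

theorem exists_forall_le_card_filter_val_sub_lt {ι : Type*} [Fintype ι] (k : ι → ZMod N)
    (hι : Fintype.card ι = N) :
    ∃ t : ZMod N, ∀ m ≤ N, m ≤ #{c | (k c - t).val < m} := by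
  -- cycle lemma: start where the excess of shifts over rows is smallest
  obtain ⟨t, -, ht⟩ := exists_min_image univ
    (fun u : ZMod N => (#{c | (k c).val < u.val} : ℤ) - u.val) univ_nonempty
  refine ⟨t, fun m hm => ?_⟩
  set u := t + (m : ZMod N)
  have hu : u.val + (if t.val + m < N then 0 else N) = t.val + m := by
    rcases hm.lt_or_eq with hm | rfl
    · have hmv : (m : ZMod N).val = m := val_cast_of_lt hm
      split_ifs with h
      · rw [val_add_of_lt (by omega), hmv]; rfl
      · rw [← hmv, val_add_val_of_le (by omega)]
    · simp [u]
  have hcount : #{c | (k c - t).val < m} + #{c | (k c).val < t.val}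
      = #{c | (k c).val < u.val} + #(univ : Finset ι) * if t.val + m < N then 0 else 1 := by
    rw [card_filter, card_filter, card_filter, ← sum_add_distrib, ← smul_eq_mul, ← sum_const,
      ← sum_add_distrib]
    refine sum_congr rfl fun c _ => ?_
    have hkc := val_sub_add_val_sub (k c) t 0
    simp only [sub_zero] at hkc
    have := (k c).val_lt
    have := u.val_lt
    split_ifs at hu hkc ⊢ <;> omega
  have := ht u (mem_univ _)
  rw [card_univ, hι] at hcount
  split_ifs at hu hcount <;> omega

end ZMod

section Sorted

variable {N : ℕ} [NeZero N]

/-- `a` is monotone when both its domain and codomain are read cyclically starting from `t`. -/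
def IsSortedFrom (t : ZMod N) (a : ZMod N → ZMod N) : Prop :=
  Monovary (fun r => (a r - t).val) (fun r => (r - t).val)

namespace IsSortedFrom

variable {t : ZMod N} {a : ZMod N → ZMod N}

theorem val_sub_le_val_sub (ha : IsSortedFrom t a) {r r' : ZMod N}
    (h : (r' - t).val ≤ (r - t).val) : (a r' - t).val ≤ (a r - t).val := by
  rcases h.lt_or_eq with h | h
  · exact ha h
  · rw [ZMod.val_sub_injective t h]

theorem val_sub_lt_iff (ha : IsSortedFrom t a) (r : ZMod N) (m : ℕ) :
    (a r - t).val < m ↔ (r - t).val < #{r' | (a r' - t).val < m} := by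
  have hr := (r - t).val_lt
  constructor
  · intro h
    calc (r - t).val < (r - t).val + 1 := Nat.lt_succ_self _
      _ = #{r' | (r' - t).val < (r - t).val + 1} := (ZMod.card_filter_val_sub_lt t hr).symm
      _ ≤ #{r' | (a r' - t).val < m} := card_le_card fun r' hr' => by
        simp only [mem_filter, mem_univ, true_and] at hr' ⊢
        exact (ha.val_sub_le_val_sub (Nat.lt_succ_iff.1 hr')).trans_lt h
  · intro h
    by_contra! hm
    have : #{r' | (a r' - t).val < m} ≤ #{r' | (r' - t).val < (r - t).val} :=
      card_le_card fun r' hr' => by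
        simp only [mem_filter, mem_univ, true_and] at hr' ⊢
        by_contra! h'
        exact (hm.trans (ha.val_sub_le_val_sub h')).not_gt hr'
    rw [ZMod.card_filter_val_sub_lt t hr.le] at this
    omega

theorem eq_of_card_eq {b : ZMod N → ZMod N} (ha : IsSortedFrom t a) (hb : IsSortedFrom t b)
    (hab : ∀ m, #{r | (a r - t).val < m} = #{r | (b r - t).val < m}) : a = b := by
  funext r
  have : (a r - t).val = (b r - t).val := eq_of_forall_gt_iff fun m => by
    rw [ha.val_sub_lt_iff, hb.val_sub_lt_iff, hab]
  exact ZMod.val_sub_injective t this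

theorem val_sub_le (ha : IsSortedFrom t a) (hcyc : ∀ m ≤ N, m ≤ #{r | (a r - t).val < m})
    (r : ZMod N) : (a r - t).val ≤ (r - t).val := by
  have := hcyc ((r - t).val + 1) (r - t).val_lt
  have := (ha.val_sub_lt_iff r ((r - t).val + 1)).2 (by omega)
  omega

theorem exists_block (ha : IsSortedFrom t a) (κ : ZMod N) :
    ∃ ρ : ZMod N, ∀ i < #{r | a r = κ}, a (ρ + i) = κ := by
  have hsplit : #{r | (a r - t).val < (κ - t).val + 1}
      = #{r | (a r - t).val < (κ - t).val} + #{r | a r = κ} := by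
    rw [card_filter, card_filter, card_filter, ← sum_add_distrib]
    refine sum_congr rfl fun r _ => ?_
    have : a r = κ ↔ (a r - t).val = (κ - t).val :=
      ⟨fun h => h ▸ rfl, fun h => ZMod.val_sub_injective t h⟩
    simp only [this]
    split_ifs <;> omega
  set n₀ := #{r | (a r - t).val < (κ - t).val}
  have hle : n₀ + #{r | a r = κ} ≤ N := hsplit ▸ (card_filter_le _ _).trans (by simp)
  refine ⟨t + n₀, fun i hi => ?_⟩
  have hrow : (t + n₀ + i - t).val = n₀ + i := by
    rw [show t + n₀ + i - t = ((n₀ + i : ℕ) : ZMod N) by push_cast; ring]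
    exact ZMod.val_cast_of_lt (by omega)
  have h₁ := ha.val_sub_lt_iff (t + n₀ + i) (κ - t).val
  have h₂ := ha.val_sub_lt_iff (t + n₀ + i) ((κ - t).val + 1)
  rw [hrow, hsplit] at h₂
  rw [hrow] at h₁
  have : (a (t + n₀ + i) - t).val = (κ - t).val := by omega
  exact ZMod.val_sub_injective t this

end IsSortedFrom

theorem exists_isSortedFrom_comp_perm (t : ZMod N) (k : ZMod N → ZMod N) :
    ∃ π : Perm (ZMod N), IsSortedFrom t (k ∘ π) := by
  have hval (i : Fin N) : (t + (i : ℕ) - t).val = i := by simp [ZMod.val_cast_of_lt i.2]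
  let e : Fin N ≃ ZMod N := Equiv.ofBijective (fun i => t + (i : ℕ))
    ((Fintype.bijective_iff_injective_and_card _).2
      ⟨fun i j h => Fin.ext <| by rw [← hval i, ← hval j, show t + (i : ℕ) = t + (j : ℕ) from h],
        by simp⟩)
  let g : Fin N → ℕ := fun i => (k (e i) - t).val
  refine ⟨e.symm.trans ((Tuple.sort g).trans e), fun r r' h => ?_⟩
  have hr : ∀ r, (r - t).val = e.symm r := fun r => by
    conv_lhs => rw [← e.apply_symm_apply r]
    exact hval _
  simp only [hr] at h
  exact Tuple.monotone_sort g h.le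

end Sorted

section Weight

variable {N : ℕ} [NeZero N]

/-- The linear term costs `N ^ 3` for every row given a shift lying after it (read from a
suitable origin), more than the quadratic term can ever vary. -/
def shiftWeight (N : ℕ) (d : ZMod N) : ℕ := N ^ 2 * d.val + d.val ^ 2

theorem sum_shiftWeight_eq (a : ZMod N → ZMod N) :
    ∑ r, shiftWeight N (r - a r) = N ^ 2 * ∑ r, (r - a r).val + ∑ r, (r - a r).val ^ 2 := by
  simp only [shiftWeight, sum_add_distrib, mul_sum]

theorem sum_val_sub_add_sum_val_sub (t : ZMod N) (a : ZMod N → ZMod N) :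
    ∑ r, (r - a r).val + ∑ r, (a r - t).val
      = ∑ r, (r - t).val + ∑ r, if (a r - t).val ≤ (r - t).val then 0 else N := by
  rw [← sum_add_distrib, ← sum_add_distrib]
  exact sum_congr rfl fun r _ => ZMod.val_sub_add_val_sub r (a r) t

theorem sum_shiftWeight_lt_of_exists_lt {t : ZMod N} {b : ZMod N → ZMod N}
    (τ : Perm (ZMod N)) (hb : ∀ r, (b r - t).val ≤ (r - t).val)
    (hτ : ∃ r, (r - t).val < (b (τ r) - t).val) :
    ∑ r, shiftWeight N (r - b r) < ∑ r, shiftWeight N (r - b (τ r)) := by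
  obtain ⟨r₀, hr₀⟩ := hτ
  have hb' := sum_val_sub_add_sum_val_sub t b
  have hτ' := sum_val_sub_add_sum_val_sub t (b ∘ τ)
  simp only [Function.comp_apply, Equiv.sum_comp τ (fun r => (b r - t).val)] at hτ'
  rw [sum_eq_zero fun r _ => if_pos (hb r)] at hb'
  have hwrap : N ≤ ∑ r, if (b (τ r) - t).val ≤ (r - t).val then 0 else N := by
    simpa [if_neg hr₀.not_ge] using single_le_sum (fun r _ => Nat.zero_le
      (if (b (τ r) - t).val ≤ (r - t).val then 0 else N)) (mem_univ r₀)
  have hsq : ∑ r, (r - b r).val ^ 2 < N ^ 2 * N := by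
    calc ∑ r, (r - b r).val ^ 2 < ∑ _r : ZMod N, N ^ 2 :=
          sum_lt_sum_of_nonempty univ_nonempty fun r _ =>
            Nat.pow_lt_pow_left (ZMod.val_lt _) two_ne_zero
      _ = N ^ 2 * N := by simp [mul_comm]
  have hL := Nat.mul_le_mul_left (N ^ 2)
    (show ∑ r, (r - b r).val + N ≤ ∑ r, (r - b (τ r)).val by omega)
  rw [mul_add] at hL
  rw [sum_shiftWeight_eq, sum_shiftWeight_eq]
  omega

theorem IsSortedFrom.comp_perm_of_sum_shiftWeight_eq {t : ZMod N} {b : ZMod N → ZMod N}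
    (hb : IsSortedFrom t b) (τ : Perm (ZMod N)) (hb₀ : ∀ r, (b r - t).val ≤ (r - t).val)
    (hτ₀ : ∀ r, (b (τ r) - t).val ≤ (r - t).val)
    (h : ∑ r, shiftWeight N (r - b (τ r)) = ∑ r, shiftWeight N (r - b r)) :
    IsSortedFrom t (b ∘ τ) := by
  have hrow {a : ZMod N → ZMod N} (ha : ∀ r, (a r - t).val ≤ (r - t).val) (r : ZMod N) :
      (r - a r).val + (a r - t).val = (r - t).val := by
    simpa [if_pos (ha r)] using ZMod.val_sub_add_val_sub r (a r) t
  have hsq {a : ZMod N → ZMod N} (ha : ∀ r, (a r - t).val ≤ (r - t).val) :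
      ∑ r, (r - a r).val ^ 2 + 2 * ∑ r, (a r - t).val * (r - t).val
        = ∑ r, (r - t).val ^ 2 + ∑ r, (a r - t).val ^ 2 := by
    rw [mul_sum, ← sum_add_distrib, ← sum_add_distrib]
    refine sum_congr rfl fun r _ => ?_
    rw [← hrow ha r]
    ring
  have hlin {a : ZMod N → ZMod N} (ha : ∀ r, (a r - t).val ≤ (r - t).val) :
      ∑ r, (r - a r).val + ∑ r, (a r - t).val = ∑ r, (r - t).val := by
    rw [← sum_add_distrib]
    exact sum_congr rfl fun r _ => hrow ha r
  have hb₁ := hsq hb₀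
  have hτ₁ := hsq (a := b ∘ τ) hτ₀
  have hb₂ := hlin hb₀
  have hτ₂ := hlin (a := b ∘ τ) hτ₀
  simp only [Function.comp_apply, Equiv.sum_comp τ (fun r => (b r - t).val),
    Equiv.sum_comp τ (fun r => (b r - t).val ^ 2)] at hτ₁ hτ₂
  rw [sum_shiftWeight_eq, sum_shiftWeight_eq] at h
  have hL : ∑ r, (r - b (τ r)).val = ∑ r, (r - b r).val := by omega
  rw [hL] at h
  exact (hb.sum_comp_perm_mul_eq_sum_mul_iff (σ := τ)).1 (by omega)

theorem exists_sum_shiftWeight_eq_iff (k : ZMod N → ZMod N) :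
    ∃ a₀ : ZMod N → ZMod N, (∀ κ, ∃ ρ : ZMod N, ∀ i < #{c | k c = κ}, a₀ (ρ + i) = κ) ∧
      ∀ π : Perm (ZMod N),
        ∑ r, shiftWeight N (r - k (π r)) = ∑ r, shiftWeight N (r - a₀ r) ↔ k ∘ π = a₀ := by
  obtain ⟨t, ht⟩ := ZMod.exists_forall_le_card_filter_val_sub_lt k (ZMod.card N)
  obtain ⟨π₀, hπ₀⟩ := exists_isSortedFrom_comp_perm t k
  have hcard (π : Perm (ZMod N)) (p : ZMod N → Prop) [DecidablePred p] :
      #{r | p (k (π r))} = #{c | p (k c)} := by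
    simp only [card_filter]
    exact Equiv.sum_comp π (fun c => if p (k c) then 1 else 0)
  have hπ₀' : ∀ r, (k (π₀ r) - t).val ≤ (r - t).val :=
    hπ₀.val_sub_le fun m hm => (hcard π₀ (fun c => (c - t).val < m)).symm ▸ ht m hm
  refine ⟨k ∘ π₀, fun κ => hcard π₀ (· = κ) ▸ hπ₀.exists_block κ,
    fun π => ⟨fun h => ?_, fun h => by rw [← h]; rfl⟩⟩
  simp only [Function.comp_apply] at h
  set τ := π.trans π₀.symm
  have hτ : ∀ r, k (π₀ (τ r)) = k (π r) := fun r => by simp [τ]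
  have hπ : ∀ r, (k (π r) - t).val ≤ (r - t).val := by
    by_contra! hwrap
    have := sum_shiftWeight_lt_of_exists_lt (b := k ∘ π₀) τ hπ₀' (by simpa [hτ] using hwrap)
    simp only [Function.comp_apply, hτ] at this
    omega
  have hsorted : IsSortedFrom t (k ∘ π) := by
    have := hπ₀.comp_perm_of_sum_shiftWeight_eq τ hπ₀' (by simpa [hτ] using hπ)
      (by simpa [hτ] using h)
    simpa [Function.comp_def, hτ] using this
  exact hsorted.eq_of_card_eq hπ₀ fun m =>
    (hcard π (fun c => (c - t).val < m)).trans (hcard π₀ fun c => (c - t).val < m).symm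

end Weight

theorem Matrix.coeff_det_C_mul_X_pow {R n : Type*} [CommRing R] [Fintype n] [DecidableEq n]
    (m : n → n → R) (e : n → n → ℕ) (p : n → n → Prop) [∀ i j, Decidable (p i j)] (W : ℕ)
    (h : ∀ σ : Perm n, ∑ j, e (σ j) j = W ↔ ∀ j, p (σ j) j) :
    (Matrix.of fun i j => C (m i j) * X ^ e i j).det.coeff W
      = (Matrix.of fun i j => if p i j then m i j else 0).det := by
  simp only [Matrix.det_apply, Matrix.of_apply, finsetSum_coeff]
  refine sum_congr rfl fun σ _ => ?_
  rw [prod_mul_distrib, ← map_prod, prod_pow_eq_pow_sum, Fintype.prod_ite_zero, Units.smul_def,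
    Units.smul_def, coeff_smul, coeff_C_mul_X_pow]
  simp only [eq_comm (a := W), h σ]

section Algebra

variable {N : ℕ} [NeZero N] {K μ : Type*} [Field K]

def ConsecutiveMinorsNeZero (𝓜 : Matrix (ZMod N) μ K) : Prop :=
  ∀ (L : ℕ) (r : ZMod N) (c : Fin L → μ), L ≤ N → Function.Injective c →
    (Matrix.of fun i j : Fin L => 𝓜 (r + (i.val : ZMod N)) (c j)).det ≠ 0

theorem ConsecutiveMinorsNeZero.det_ite_ne_zero {𝓜 : Matrix (ZMod N) μ K}
    (h𝓜 : ConsecutiveMinorsNeZero 𝓜) {ℓ : ZMod N → μ} {k : ZMod N → ZMod N}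
    (hinj : Function.Injective fun c => (ℓ c, k c)) {a : ZMod N → ZMod N}
    (ha : ∀ κ, ∃ ρ : ZMod N, ∀ i < #{c | k c = κ}, a (ρ + i) = κ) :
    (Matrix.of fun r c => if k c = a r then 𝓜 r (ℓ c) else 0).det ≠ 0 := by
  rw [Ne, ← Matrix.exists_mulVec_eq_zero_iff]
  rintro ⟨v, hv0, hv⟩
  refine hv0 (funext fun c₀ => ?_)
  obtain ⟨ρ, hρ⟩ := ha (k c₀)
  set Λ : Finset (ZMod N) := {c | k c = k c₀}
  have hΛ (x : Λ) : k x = k c₀ := (mem_filter.1 x.2).2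
  let e := Λ.equivFin
  have hminor := h𝓜 #Λ ρ (fun j => ℓ (e.symm j)) ((card_filter_le _ _).trans (by simp))
    fun j₁ j₂ h => e.symm.injective <| Subtype.ext <| hinj <| Prod.ext h <| by simp [hΛ]
  have hker : Matrix.mulVec
      (Matrix.of fun i j : Fin #Λ => 𝓜 (ρ + (i.val : ZMod N)) (ℓ (e.symm j)))
      (fun j => v (e.symm j)) = 0 := by
    funext i
    have hrow := congrFun hv (ρ + (i.val : ZMod N))
    simp only [Matrix.mulVec, dotProduct, Matrix.of_apply, hρ i i.2, ite_mul, zero_mul,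
      ← sum_filter, Pi.zero_apply] at hrow ⊢
    rw [← hrow, ← sum_coe_sort Λ]
    exact e.symm.sum_comp fun x : Λ => 𝓜 (ρ + (i.val : ZMod N)) (ℓ x) * v x
  by_contra hc₀
  refine hminor (Matrix.exists_mulVec_eq_zero_iff.1 ⟨_, fun h => hc₀ ?_, hker⟩)
  simpa using congrFun h (e ⟨c₀, by simp [Λ]⟩)

/-- Column `c` is `𝓜_{ℓ c} T^{k c} f`. -/
def shiftMatrix {ι : Type*} (𝓜 : Matrix (ZMod N) μ K) (ℓ : ι → μ) (k : ι → ZMod N) :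
    (ZMod N → K) →ₗ[K] Matrix (ZMod N) ι K where
  toFun f := Matrix.of fun r c => 𝓜 r (ℓ c) * f (r - k c)
  map_add' f g := by ext; simp [mul_add]
  map_smul' a f := by ext; simp [mul_left_comm]

theorem ConsecutiveMinorsNeZero.exists_det_shiftMatrix_ne_zero [Infinite K]
    {𝓜 : Matrix (ZMod N) μ K} (h𝓜 : ConsecutiveMinorsNeZero 𝓜) {ℓ : ZMod N → μ}
    {k : ZMod N → ZMod N} (hinj : Function.Injective fun c => (ℓ c, k c)) :
    ∃ f, (shiftMatrix 𝓜 ℓ k f).det ≠ 0 := by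
  obtain ⟨a₀, hblock, hcost⟩ := exists_sum_shiftWeight_eq_iff k
  have hcoeff := Matrix.coeff_det_C_mul_X_pow (fun r c => 𝓜 r (ℓ c))
    (fun r c => shiftWeight N (r - k c)) (fun r c => k c = a₀ r) _ fun σ => by
      rw [← σ.symm.sum_comp, ← σ.symm.forall_congr_right]
      simpa [funext_iff] using hcost σ.symm
  set Q := Matrix.of fun r c => C (𝓜 r (ℓ c)) * X ^ shiftWeight N (r - k c)
  have hQ : Q.det ≠ 0 := fun h =>
    h𝓜.det_ite_ne_zero hinj hblock (by rw [← hcoeff, h, coeff_zero])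
  obtain ⟨z, hz⟩ : ∃ z, Q.det.eval z ≠ 0 := by
    by_contra! h
    exact hQ (Polynomial.funext (by simpa using h))
  refine ⟨fun j => z ^ shiftWeight N j, ?_⟩
  rw [← coe_evalRingHom, RingHom.map_det] at hz
  convert hz
  ext r c
  simp [shiftMatrix, Q]

end Algebra

theorem dense_setOf_det_ne_zero {𝕜 V n : Type*} [NontriviallyNormedField 𝕜] [CompleteSpace 𝕜]
    [AddCommGroup V] [Module 𝕜 V] [TopologicalSpace V] [ContinuousAdd V] [ContinuousSMul 𝕜 V]
    [Fintype n] [DecidableEq n] (A : V →ₗ[𝕜] Matrix n n 𝕜) {v₁ : V} (hv₁ : (A v₁).det ≠ 0) :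
    Dense {v | (A v).det ≠ 0} := by
  intro v₀
  let P : 𝕜[X] := (Matrix.of fun i j => C (A v₀ i j) + X * C (A (v₁ - v₀) i j)).det
  have hP (z : 𝕜) : P.eval z = (A (v₀ + z • (v₁ - v₀))).det := by
    rw [← coe_evalRingHom, RingHom.map_det]
    congr
    ext i j
    simp
  have hP₀ : P ≠ 0 := fun h => hv₁ (by simpa [h] using (hP 1).symm)
  have hdense : Dense {z : 𝕜 | ¬P.IsRoot z} :=
    (finite_setOfPred_isRoot hP₀).countable.dense_compl 𝕜
  simpa using map_mem_closure (f := fun z : 𝕜 => v₀ + z • (v₁ - v₀)) (by fun_prop) (hdense 0)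
    fun z hz => (hP z).symm.trans_ne hz

/-- If every square submatrix of `𝓜` with cyclically consecutive rows
has nonzero determinant, then there is an open dense set `S ⊆ ℂ^N` such that for every
`f ∈ S` the family `{𝓜_ℓ T^k f}` of `N·M` vectors is full spark. Here `(T^k f) i = f (i - k)`
is the cyclic shift and `𝓜_ℓ` is the diagonal matrix built from the `ℓ`-th column of `𝓜`. -/
theorem fullSpark_of_consecutive_minors
    (N M : ℕ) [NeZero N] (𝓜 : Matrix (ZMod N) (Fin M) ℂ)
    (hminor : ∀ (L : ℕ) (r : ZMod N) (c : Fin L → Fin M), L ≤ N → Function.Injective c →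
      (Matrix.of fun i j : Fin L => 𝓜 (r + (i.val : ZMod N)) (c j)).det ≠ 0) :
    ∃ S : Set (ZMod N → ℂ), IsOpen S ∧ Dense S ∧ ∀ f ∈ S,
      IsFullSpark (fun p : Fin M × ZMod N =>
        (fun i : ZMod N => 𝓜 i p.1 * f (i - p.2))) := by
  let e (s : {s : Finset (Fin M × ZMod N) // #s = N}) : ZMod N ≃ s :=
    Fintype.equivOfCardEq (by simp [s.2])
  let A s := shiftMatrix 𝓜 (fun c => (e s c).1.1) (fun c => (e s c).1.2)
  have hA s : ∃ f, (A s f).det ≠ 0 := ConsecutiveMinorsNeZero.exists_det_shiftMatrix_ne_zero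
    hminor (Subtype.val_injective.comp (e s).injective)
  have hopen s : IsOpen {f | (A s f).det ≠ 0} :=
    isOpen_ne_fun (A s).continuous_of_finiteDimensional.matrix_det continuous_const
  refine ⟨⋂ s, {f | (A s f).det ≠ 0}, isOpen_iInter_of_finite hopen,
    dense_iInter_of_isOpen hopen fun s => dense_setOf_det_ne_zero _ (hA s).choose_spec,
    fun f hf s hs => ?_⟩
  replace hs : #s = N := by simpa using hs
  exact (linearIndependent_equiv (e ⟨s, hs⟩)).1
    (Matrix.linearIndependent_cols_of_det_ne_zero (Set.mem_iInter.1 hf ⟨s, hs⟩))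
end

section
/- Let 𝓜 = (m_{kℓ}) be an N × M complex matrix whose columns form a tight frame for ℂ^N (equivalently, 𝓜𝓜* is a positive multiple of the identity, i.e., the rows of 𝓜 are pairwise orthogonal and have equal norms). Then for every nonzero f ∈ ℂ^N, the family {𝓜_ℓ T^k f : 0 ≤ ℓ ≤ M−1, 0 ≤ k ≤ N−1} is a tight frame for ℂ^N. -/
/-!
For a fixed shift `k`, the coefficient `⟪w, 𝓜_ℓ T^k f⟫` is the `ℓ`-th entry of the row vector
`g_k 𝓜`, where `g_k i = conj (w i) * f (i - k)`. Since `𝓜 𝓜ᴴ = A • 1`, summing over `ℓ` gives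
`A ‖g_k‖²`, and summing `‖g_k‖²` over `k` gives `‖w‖² ‖f‖²` because shifts preserve `‖f‖`.
-/

open scoped InnerProductSpace

open scoped ComplexConjugate Matrix

namespace Matrix

variable {𝕜 m n : Type*} [RCLike 𝕜] [Fintype m]

lemma dotProduct_star_self_eq_sum_norm_sq (x : m → 𝕜) :
    x ⬝ᵥ star x = ∑ i, (‖x i‖ ^ 2 : 𝕜) := by
  simp only [dotProduct, Pi.star_apply, RCLike.star_def, RCLike.mul_conj]

lemma sum_norm_sq_vecMul_of_mul_conjTranspose_eq_smul [Fintype n] [DecidableEq m]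
    {𝓜 : Matrix m n 𝕜} {A : ℝ} (h𝓜 : 𝓜 * 𝓜ᴴ = (A : 𝕜) • 1) (g : m → 𝕜) :
    ∑ ℓ, ‖(g ᵥ* 𝓜) ℓ‖ ^ 2 = A * ∑ i, ‖g i‖ ^ 2 := by
  apply RCLike.ofReal_injective (K := 𝕜)
  push_cast
  rw [← dotProduct_star_self_eq_sum_norm_sq, ← dotProduct_star_self_eq_sum_norm_sq,
    star_vecMul, ← dotProduct_mulVec, mulVec_mulVec, h𝓜, smul_mulVec, one_mulVec,
    dotProduct_smul, smul_eq_mul]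

lemma inner_toLp_mul_col_eq_vecMul (𝓜 : Matrix m n 𝕜) (w : EuclideanSpace 𝕜 m) (v : m → 𝕜)
    (ℓ : n) :
    ⟪w, WithLp.toLp 2 (fun i => 𝓜 i ℓ * v i)⟫_𝕜 = ((fun i => conj (w i) * v i) ᵥ* 𝓜) ℓ := by
  simp only [PiLp.inner_apply, RCLike.inner_apply, vecMul, dotProduct]
  exact Finset.sum_congr rfl fun i _ => by ring

end Matrix

lemma sum_norm_sq_comp_sub_left {G E : Type*} [AddCommGroup G] [Fintype G]
    [SeminormedAddCommGroup E] (f : G → E) (i : G) :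
    ∑ k, ‖f (i - k)‖ ^ 2 = ∑ k, ‖f k‖ ^ 2 :=
  Fintype.sum_equiv (Equiv.subLeft i) _ _ fun _ => rfl

/-- If the columns of the `N × M` matrix `𝓜` form a tight frame for
`ℂ^N` (equivalently `𝓜𝓜* = A·1` for some `A > 0`), then for every nonzero `f ∈ ℂ^N` the
family `{𝓜_ℓ T^k f : 0 ≤ ℓ ≤ M−1, 0 ≤ k ≤ N−1}` is a tight frame for `ℂ^N`. -/
theorem tightFrame_of_tight_columns
    (N M : ℕ) [NeZero N] (𝓜 : Matrix (ZMod N) (Fin M) ℂ)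
    (htight : ∃ A : ℝ, 0 < A ∧ 𝓜 * 𝓜.conjTranspose = (A : ℂ) • 1)
    (f : EuclideanSpace ℂ (ZMod N)) (hf : f ≠ 0) :
    ∃ A : ℝ, 0 < A ∧ ∀ w : EuclideanSpace ℂ (ZMod N),
      ∑ q : Fin M × ZMod N,
        ‖⟪w, (WithLp.toLp 2 (fun i : ZMod N => 𝓜 i q.1 * f (i - q.2)) : EuclideanSpace ℂ (ZMod N))⟫_ℂ‖ ^ 2
        = A * ‖w‖ ^ 2 := by
  obtain ⟨A, hA, h𝓜⟩ := htight
  have hf : 0 < ‖f‖ := norm_pos_iff.mpr hf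
  refine ⟨A * ‖f‖ ^ 2, by positivity, fun w => ?_⟩
  calc _ = ∑ k, ∑ ℓ, ‖((fun i => conj (w i) * f (i - k)) ᵥ* 𝓜) ℓ‖ ^ 2 := by
        simp only [Fintype.sum_prod_type_right, Matrix.inner_toLp_mul_col_eq_vecMul]
    _ = A * ∑ i, ‖w i‖ ^ 2 * ∑ k, ‖f (i - k)‖ ^ 2 := by
        simp only [Matrix.sum_norm_sq_vecMul_of_mul_conjTranspose_eq_smul h𝓜, norm_mul,
          RCLike.norm_conj, mul_pow, ← Finset.mul_sum]
        rw [Finset.sum_comm]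
        simp only [Finset.mul_sum]
    _ = A * ‖f‖ ^ 2 * ‖w‖ ^ 2 := by
        simp only [sum_norm_sq_comp_sub_left, ← Finset.sum_mul, ← EuclideanSpace.norm_sq_eq]
        ring
end

section
/- Let G be a finite group and π a faithful unitary representation of G on a finite-dimensional complex inner product space H. Suppose there exists x ∈ G such that the order of the unitary operator π(x) is at least dim H and π(x) has an eigenvalue of multiplicity strictly greater than one. Then π is spark deficient: for every φ ∈ H, the family (π(g)φ)_{g∈G} is not full spark. -/
/-!
Since `π x` has finite order, its minimal polynomial divides `X ^ m - 1` and so has distinct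
roots, one for each eigenvalue. As the eigenspaces are independent, a repeated eigenvalue forces
`deg (minpoly (π x)) < dim H`. The coefficients of the minimal polynomial then give a nontrivial
relation among the vectors `π (x ^ k) φ`, `k < dim H`, and the `x ^ k` are `dim H` distinct
group elements because the order of `π x` is at least `dim H`.
-/

open scoped InnerProductSpace

open Polynomial Module

section FiniteDimensional

variable {K V : Type*} [Field K] [AddCommGroup V] [Module K V] [FiniteDimensional K V]

theorem iSupIndep.sum_finrank_le_finrank {ι : Type*} [Fintype ι] {p : ι → Submodule K V}
    (hp : iSupIndep p) : ∑ i, finrank K (p i) ≤ finrank K V := by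
  classical
  rw [← finrank_directSum]
  exact LinearMap.finrank_le_finrank_of_injective hp.dfinsupp_lsum_injective

namespace Module.End

theorem sum_finrank_eigenspace_le_finrank (f : End K V) (s : Finset K) :
    ∑ μ ∈ s, finrank K (f.eigenspace μ) ≤ finrank K V := by
  rw [← Finset.sum_coe_sort]
  exact (f.eigenspaces_iSupIndep.comp Subtype.val_injective).sum_finrank_le_finrank

theorem card_rootsToFinset_minpoly_lt_finrank [DecidableEq K] (f : End K V) {μ : K}
    (hμ : 1 < finrank K (f.eigenspace μ)) :
    (minpoly K f).roots.toFinset.card < finrank K V := by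
  have hmem {ν : K} : ν ∈ (minpoly K f).roots.toFinset ↔ f.HasEigenvalue ν := by
    rw [Multiset.mem_toFinset, mem_roots (minpoly.ne_zero (Algebra.IsIntegral.isIntegral f)),
      hasEigenvalue_iff_isRoot]
  have hμmem : μ ∈ (minpoly K f).roots.toFinset :=
    hmem.mpr (Submodule.one_le_finrank_iff.mp hμ.le)
  calc (minpoly K f).roots.toFinset.card
      = ∑ _ν ∈ (minpoly K f).roots.toFinset, 1 := by simp
    _ < ∑ ν ∈ (minpoly K f).roots.toFinset, finrank K (f.eigenspace ν) :=
      Finset.sum_lt_sum (fun ν hν => Submodule.one_le_finrank_iff.mpr (hmem.mp hν))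
        ⟨μ, hμmem, hμ⟩
    _ ≤ finrank K V := f.sum_finrank_eigenspace_le_finrank _

theorem natDegree_minpoly_lt_finrank (f : End K V) (hsep : (minpoly K f).Separable)
    (hsplit : (minpoly K f).Splits) {μ : K} (hμ : 1 < finrank K (f.eigenspace μ)) :
    (minpoly K f).natDegree < finrank K V := by
  classical
  rw [← splits_iff_card_roots.mp hsplit, ← Multiset.toFinset_card_of_nodup (nodup_roots hsep)]
  exact f.card_rootsToFinset_minpoly_lt_finrank hμ

theorem not_linearIndependent_pow_apply (f : End K V) (v : V) {n : ℕ}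
    (hn : (minpoly K f).natDegree < n) :
    ¬ LinearIndependent K (fun k : Fin n => (f ^ (k : ℕ)) v) := by
  intro hli
  have hrel : ∑ k : Fin n, (minpoly K f).coeff k • (f ^ (k : ℕ)) v = 0 := by
    rw [Fin.sum_univ_eq_sum_range (fun k => (minpoly K f).coeff k • (f ^ k) v)]
    simpa [aeval_eq_sum_range' hn] using congrArg (· v) (minpoly.aeval K f)
  have hlead := Fintype.linearIndependent_iff.mp hli _ hrel ⟨_, hn⟩
  have hmonic := minpoly.monic (Algebra.IsIntegral.isIntegral (R := K) f)
  exact one_ne_zero <| hmonic.leadingCoeff.symm.trans hlead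

end Module.End

end FiniteDimensional

theorem minpoly.separable_of_isOfFinOrder {K A : Type*} [Field K] [CharZero K] [Ring A]
    [Algebra K A] {a : A} (ha : IsOfFinOrder a) : (minpoly K a).Separable := by
  obtain ⟨m, hm, ham⟩ := ha.exists_pow_eq_one
  refine (X_pow_sub_one_separable_iff.mpr (by exact_mod_cast hm.ne')).of_dvd (minpoly.dvd K a ?_)
  simp [ham]

theorem IsFullSpark.linearIndependent_comp {ι V : Type*} [AddCommGroup V] [Module ℂ V]
    {v : ι → V} (hv : IsFullSpark v) {e : Fin (finrank ℂ V) → ι}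
    (he : Function.Injective e) :
    LinearIndependent ℂ (v ∘ e) := by
  classical
  let s := Finset.univ.map ⟨e, he⟩
  have hmem (k : Fin (finrank ℂ V)) : e k ∈ s := Finset.mem_map_of_mem _ (Finset.mem_univ k)
  refine (hv s (by simp [s])).comp (fun k => ⟨e k, hmem k⟩) fun a b hab => he ?_
  exact congrArg Subtype.val hab

theorem sparkDeficient_of_repeated_eigenvalue_general
    {G : Type*} [Group G]
    {H : Type*} [NormedAddCommGroup H] [InnerProductSpace ℂ H] [FiniteDimensional ℂ H]
    (π : G →* (H →ₗ[ℂ] H))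
    (x : G) (hx : Module.finrank ℂ H ≤ orderOf (π x))
    (heig : ∃ μ : ℂ, 1 < Module.finrank ℂ (Module.End.eigenspace (π x) μ)) :
    ∀ φ : H, ¬ IsFullSpark (fun g : G => π g φ) := by
  intro φ hφ
  obtain ⟨μ, hμ⟩ := heig
  have hA : IsOfFinOrder (π x) :=
    orderOf_pos_iff.mp <| zero_lt_one.trans <| (hμ.trans_le (Submodule.finrank_le _)).trans_le hx
  have hdeg := Module.End.natDegree_minpoly_lt_finrank (π x)
    (minpoly.separable_of_isOfFinOrder hA) (IsAlgClosed.splits _) hμ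
  have hinj : Function.Injective fun k : Fin (finrank ℂ H) => x ^ (k : ℕ) := fun a b hab =>
    Fin.ext <| pow_injOn_Iio_orderOf (a.2.trans_le hx) (b.2.trans_le hx)
      (by simpa using congrArg π hab)
  refine Module.End.not_linearIndependent_pow_apply (π x) φ hdeg ?_
  simpa [Function.comp_def] using hφ.linearIndependent_comp hinj

/-- If `π` is a faithful unitary representation of a finite group `G`
on `H`, and some `π(x)` has order at least `dim H` and an eigenvalue of multiplicity
strictly greater than one, then `π` is spark deficient. -/
theorem sparkDeficient_of_repeated_eigenvalue
    {G : Type*} [Group G] [Fintype G]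
    {H : Type*} [NormedAddCommGroup H] [InnerProductSpace ℂ H] [FiniteDimensional ℂ H]
    (π : G →* (H →ₗ[ℂ] H))
    (hunitary : ∀ g (v w : H), ⟪π g v, π g w⟫_ℂ = ⟪v, w⟫_ℂ)
    (hfaithful : Function.Injective π)
    (x : G) (hx : Module.finrank ℂ H ≤ orderOf (π x))
    (heig : ∃ μ : ℂ, 1 < Module.finrank ℂ (Module.End.eigenspace (π x) μ)) :
    ∀ φ : H, ¬ IsFullSpark (fun g : G => π g φ) :=
  sparkDeficient_of_repeated_eigenvalue_general π x hx heig
end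

section
/- Let G be a non-abelian finite group with non-trivial center. Then G is irreducibly spark deficient: every irreducible unitary representation π of G on a finite-dimensional complex inner product space H with dim H > 1 is spark deficient, i.e., for every f ∈ H the family (π(g)f)_{g∈G} is not full spark. -/
open scoped InnerProductSpace

/-!
A central element `z ≠ 1` commutes with the whole representation, so by Schur's lemma `π z` is a
scalar `μ`; hence `π 1 f = f` and `π z f = μ • f` are linearly dependent. An irreducible
representation is spanned by any nonzero orbit, so `dim H ≤ |G|`, and since `dim H ≥ 2` the two
indices `1, z` fit into a subfamily of `dim H` vectors, which full spark would force to be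
independent.
-/

open Module

theorem IsFullSpark.linearIndepOn_of_card_le {ι V : Type*} [Fintype ι] [AddCommGroup V]
    [Module ℂ V] {v : ι → V} (hv : IsFullSpark v) (hcard : finrank ℂ V ≤ Fintype.card ι)
    (t : Finset ι) (ht : t.card ≤ finrank ℂ V) : LinearIndepOn ℂ v t := by
  obtain ⟨s, hts, hs⟩ := Finset.exists_superset_card_eq ht hcard
  exact LinearIndepOn.mono (hv s hs) (Finset.coe_subset.mpr hts)

section Irreducible

variable {K V G : Type*} [Field K] [AddCommGroup V] [Module K V] [Monoid G]

theorem exists_forall_apply_eq_smul_of_commute [IsAlgClosed K] [FiniteDimensional K V]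
    [Nontrivial V] (π : G →* End K V)
    (hirred : ∀ U : Submodule K V, (∀ g, U.map (π g) ≤ U) → U = ⊥ ∨ U = ⊤)
    {T : End K V} (hT : ∀ g, Commute T (π g)) : ∃ μ : K, ∀ v, T v = μ • v := by
  obtain ⟨μ, hμ⟩ := End.exists_eigenvalue T
  have hinv : ∀ g, (T.eigenspace μ).map (π g) ≤ T.eigenspace μ := fun g =>
    Submodule.map_le_iff_le_comap.mpr fun _ hv => End.mapsTo_genEigenspace_of_comm (hT g) μ 1 hv
  refine ⟨μ, fun v => End.mem_eigenspace_iff.mp ?_⟩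
  rw [(hirred _ hinv).resolve_left hμ]
  exact Submodule.mem_top

theorem span_range_apply_eq_top (π : G →* End K V)
    (hirred : ∀ U : Submodule K V, (∀ g, U.map (π g) ≤ U) → U = ⊥ ∨ U = ⊤)
    {f : V} (hf : f ≠ 0) : Submodule.span K (Set.range fun g => π g f) = ⊤ := by
  refine (hirred _ fun g => ?_).resolve_left fun hbot => hf ?_
  · rw [Submodule.map_span, Submodule.span_le]
    rintro _ ⟨_, ⟨h, rfl⟩, rfl⟩
    exact Submodule.subset_span ⟨g * h, by simp⟩
  · rw [← Submodule.mem_bot K, ← hbot]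
    exact Submodule.subset_span ⟨1, by simp⟩

theorem finrank_le_card_of_irreducible [Fintype G] [Nontrivial V] (π : G →* End K V)
    (hirred : ∀ U : Submodule K V, (∀ g, U.map (π g) ≤ U) → U = ⊥ ∨ U = ⊤) :
    finrank K V ≤ Fintype.card G := by
  obtain ⟨f, hf⟩ := exists_ne (0 : V)
  have := finrank_range_le_card (R := K) fun g => π g f
  rwa [Set.finrank, span_range_apply_eq_top π hirred hf, finrank_top] at this

end Irreducible

theorem irreduciblySparkDeficient_of_nontrivial_center_general
    {G : Type*} [Group G] [Fintype G]
    (hcenter : Subgroup.center G ≠ ⊥)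
    (H : Type*) [NormedAddCommGroup H] [InnerProductSpace ℂ H] [FiniteDimensional ℂ H]
    (π : G →* (H →ₗ[ℂ] H))
    (hirred : ∀ U : Submodule ℂ H, (∀ g, U.map (π g) ≤ U) → U = ⊥ ∨ U = ⊤)
    (hdim : 1 < Module.finrank ℂ H) :
    ∀ f : H, ¬ IsFullSpark (fun g : G => π g f) := by
  classical
  intro f hfs
  have : Nontrivial H := Module.nontrivial_of_finrank_pos (R := ℂ) (by omega)
  obtain ⟨z, hz, hz1⟩ := (Subgroup.center G).bot_or_exists_ne_one.resolve_left hcenter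
  obtain ⟨μ, hμ⟩ := exists_forall_apply_eq_smul_of_commute π hirred
    (T := π z) fun g => Commute.map (Subgroup.mem_center_iff.mp hz g).symm π
  have hpair : LinearIndepOn ℂ (fun g => π g f) {1, z} := by
    simpa using hfs.linearIndepOn_of_card_le (finrank_le_card_of_irreducible π hirred)
      {1, z} (Finset.card_le_two.trans hdim)
  have := ((LinearIndepOn.pair_iff _ (Ne.symm hz1)).mp hpair μ (-1) (by simp [hμ])).2
  norm_num at this

/-- A non-abelian finite group with non-trivial center is irreducibly
spark deficient: every irreducible unitary representation of dimension `> 1` is spark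
deficient. -/
theorem irreduciblySparkDeficient_of_nontrivial_center
    {G : Type*} [Group G] [Fintype G]
    (hnonab : ∃ a b : G, a * b ≠ b * a)
    (hcenter : Subgroup.center G ≠ ⊥)
    (H : Type*) [NormedAddCommGroup H] [InnerProductSpace ℂ H] [FiniteDimensional ℂ H]
    (π : G →* (H →ₗ[ℂ] H))
    (hunitary : ∀ g (v w : H), ⟪π g v, π g w⟫_ℂ = ⟪v, w⟫_ℂ)
    (hirred : ∀ U : Submodule ℂ H, (∀ g, U.map (π g) ≤ U) → U = ⊥ ∨ U = ⊤)
    (hdim : 1 < Module.finrank ℂ H) :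
    ∀ f : H, ¬ IsFullSpark (fun g : G => π g f) :=
  irreduciblySparkDeficient_of_nontrivial_center_general hcenter H π hirred hdim
end

section
/- Let K be a finite group, H a non-trivial subgroup of the automorphism group of K, and G = K ⋊ H the semidirect product with multiplication (n,h)(m,s) = (n·h(m), h·s). If the center of K contains a non-trivial element n that is fixed by every automorphism in H, then (n, e) is a non-trivial element of the center of G; consequently G is irreducibly spark deficient: every irreducible unitary representation of G of dimension greater than 1 is spark deficient. -/
open scoped InnerProductSpace

/-!
A nontrivial central element `z` acts on an irreducible representation `V` by a scalar
(Schur), so `π z v` is a multiple of `v`. An irreducible `V` is spanned by any orbit, hence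
`dim V ≤ |G|`; this is what makes some `dim V`-subfamily of `(π g v)_g` contain both `v` and
`π z v`, and hence be dependent (with more dimensions than group elements, full spark would
hold vacuously).
-/

open Module

namespace SemidirectProduct

variable {N G : Type*} [Group N] [Group G] {φ : G →* MulAut N}

instance [Finite N] [Finite G] : Finite (N ⋊[φ] G) := Finite.of_equiv _ equivProd.symm

theorem inl_mem_center {n : N} (hn : n ∈ Subgroup.center N) (hfix : ∀ g, φ g n = n) :
    inl n ∈ Subgroup.center (N ⋊[φ] G) := by
  refine Subgroup.mem_center_iff.mpr fun g => ?_
  ext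
  · simp [hfix, Subgroup.mem_center_iff.mp hn g.left]
  · simp

end SemidirectProduct

section Irreducible

variable {G k V : Type*} [Monoid G] [Field k] [AddCommGroup V] [Module k V]
  {π : G →* End k V}

/-- Schur's lemma. -/
theorem exists_eq_smul_of_commute_of_irreducible [IsAlgClosed k] [FiniteDimensional k V]
    [Nontrivial V] (hirr : ∀ U : Submodule k V, (∀ g, U.map (π g) ≤ U) → U = ⊥ ∨ U = ⊤)
    {f : End k V} (hf : ∀ g, Commute f (π g)) : ∃ c : k, ∀ w, f w = c • w := by
  obtain ⟨c, hc⟩ := End.exists_eigenvalue f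
  have hinv : ∀ g, (f.eigenspace c).map (π g) ≤ f.eigenspace c := fun g =>
    Submodule.map_le_iff_le_comap.mpr fun _ hw => End.mapsTo_genEigenspace_of_comm (hf g) c 1 hw
  refine ⟨c, fun w => End.mem_eigenspace_iff.mp ?_⟩
  rcases hirr _ hinv with hbot | htop
  · exact absurd hbot (End.hasEigenvalue_iff.mp hc)
  · exact htop ▸ Submodule.mem_top

theorem finrank_le_card_of_irreducible_s11 [Finite G]
    (hirr : ∀ U : Submodule k V, (∀ g, U.map (π g) ≤ U) → U = ⊥ ∨ U = ⊤) :
    finrank k V ≤ Nat.card G := by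
  have := Fintype.ofFinite G
  rcases subsingleton_or_nontrivial V with hV | hV
  · simp [finrank_zero_of_subsingleton]
  obtain ⟨w, hw⟩ := exists_ne (0 : V)
  let orbit := Submodule.span k (Set.range fun g => π g w)
  have hinv : ∀ g, orbit.map (π g) ≤ orbit := fun g => by
    rw [Submodule.map_span_le]
    rintro _ ⟨g', rfl⟩
    exact Submodule.subset_span ⟨g * g', by simp⟩
  have hw_mem : w ∈ orbit := Submodule.subset_span ⟨1, by simp⟩
  have htop : orbit = ⊤ := (hirr orbit hinv).resolve_left fun hbot =>
    hw (by rwa [hbot, Submodule.mem_bot] at hw_mem)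
  calc finrank k V = finrank k orbit := by rw [htop, finrank_top]
    _ ≤ Fintype.card G := finrank_range_le_card _
    _ = Nat.card G := Nat.card_eq_fintype_card.symm

end Irreducible

theorem IsFullSpark.linearIndepOn_pair {ι V : Type*} [AddCommGroup V] [Module ℂ V] [Finite ι]
    {v : ι → V} (hv : IsFullSpark v) (h2 : 2 ≤ finrank ℂ V) (hcard : finrank ℂ V ≤ Nat.card ι)
    {i j : ι} (hij : i ≠ j) : LinearIndepOn ℂ v {i, j} := by
  classical
  have := Fintype.ofFinite ι
  obtain ⟨s, hsub, -, hs⟩ := Finset.exists_subsuperset_card_eq (n := finrank ℂ V)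
    (Finset.subset_univ {i, j}) (by rwa [Finset.card_pair hij])
    (by rwa [Finset.card_univ, ← Nat.card_eq_fintype_card])
  exact LinearIndepOn.mono (hv s hs) (by simpa using Finset.coe_subset.mpr hsub)

theorem not_isFullSpark_of_eq_smul {ι V : Type*} [AddCommGroup V] [Module ℂ V] [Finite ι]
    {v : ι → V} (h2 : 2 ≤ finrank ℂ V) (hcard : finrank ℂ V ≤ Nat.card ι)
    {i j : ι} (hij : i ≠ j) {c : ℂ} (hc : v j = c • v i) : ¬ IsFullSpark v := fun hv => by
  have := (LinearIndepOn.pair_iff v hij).mp (hv.linearIndepOn_pair h2 hcard hij) c (-1)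
  simp_all

theorem not_isFullSpark_of_mem_center_of_irreducible {G V : Type*} [Group G] [Finite G]
    [AddCommGroup V] [Module ℂ V] [FiniteDimensional ℂ V] {π : G →* End ℂ V}
    (hirr : ∀ U : Submodule ℂ V, (∀ g, U.map (π g) ≤ U) → U = ⊥ ∨ U = ⊤)
    (h2 : 2 ≤ finrank ℂ V) {z : G} (hz : z ∈ Subgroup.center G) (hz1 : z ≠ 1) (v : V) :
    ¬ IsFullSpark (fun g => π g v) := by
  have : Nontrivial V := Module.nontrivial_of_finrank_pos (R := ℂ) (by omega)
  obtain ⟨c, hc⟩ := exists_eq_smul_of_commute_of_irreducible hirr (f := π z)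
    fun g => Commute.map (Subgroup.mem_center_iff.mp hz g).symm π
  exact not_isFullSpark_of_eq_smul h2 (finrank_le_card_of_irreducible_s11 hirr) hz1.symm
    (i := 1) (c := c) (by simp [hc])

theorem sparkDeficient_semidirect_of_fixed_central_general
    (K : Type*) [Group K] [Finite K]
    (H : Subgroup (MulAut K))
    (n : K) (hn1 : n ≠ 1) (hnZ : n ∈ Subgroup.center K)
    (hfix : ∀ h : H, (h : MulAut K) n = n) :
    (SemidirectProduct.inl n : K ⋊[H.subtype] H) ∈
        Subgroup.center (K ⋊[H.subtype] H) ∧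
      (SemidirectProduct.inl n : K ⋊[H.subtype] H) ≠ 1 ∧
      ∀ (V : Type) [NormedAddCommGroup V] [InnerProductSpace ℂ V] [FiniteDimensional ℂ V]
        (π : (K ⋊[H.subtype] H) →* (V →ₗ[ℂ] V)),
        (∀ g (v w : V), ⟪π g v, π g w⟫_ℂ = ⟪v, w⟫_ℂ) →
        (∀ U : Submodule ℂ V, (∀ g, U.map (π g) ≤ U) → U = ⊥ ∨ U = ⊤) →
        1 < Module.finrank ℂ V →
        ∀ v : V, ¬ IsFullSpark (fun g : K ⋊[H.subtype] H => π g v) := by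
  have hcen := SemidirectProduct.inl_mem_center (φ := H.subtype) hnZ hfix
  have hne : (SemidirectProduct.inl n : K ⋊[H.subtype] H) ≠ 1 :=
    (map_ne_one_iff _ SemidirectProduct.inl_injective).mpr hn1
  exact ⟨hcen, hne, fun V _ _ _ π _ hirr hdim =>
    not_isFullSpark_of_mem_center_of_irreducible hirr hdim hcen hne⟩

/-- Let `K` be a finite group, `H` a non-trivial subgroup of `MulAut K`,
and `G = K ⋊ H`. If the center of `K` contains a non-trivial element `n` fixed by every
automorphism in `H`, then `(n, e)` is a non-trivial central element of `G`; consequently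
`G` is irreducibly spark deficient. -/
theorem sparkDeficient_semidirect_of_fixed_central
    (K : Type*) [Group K] [Finite K]
    (H : Subgroup (MulAut K)) (hH : H ≠ ⊥)
    (n : K) (hn1 : n ≠ 1) (hnZ : n ∈ Subgroup.center K)
    (hfix : ∀ h : H, (h : MulAut K) n = n) :
    (SemidirectProduct.inl n : K ⋊[H.subtype] H) ∈
        Subgroup.center (K ⋊[H.subtype] H) ∧
      (SemidirectProduct.inl n : K ⋊[H.subtype] H) ≠ 1 ∧
      ∀ (V : Type) [NormedAddCommGroup V] [InnerProductSpace ℂ V] [FiniteDimensional ℂ V]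
        (π : (K ⋊[H.subtype] H) →* (V →ₗ[ℂ] V)),
        (∀ g (v w : V), ⟪π g v, π g w⟫_ℂ = ⟪v, w⟫_ℂ) →
        (∀ U : Submodule ℂ V, (∀ g, U.map (π g) ≤ U) → U = ⊥ ∨ U = ⊤) →
        1 < Module.finrank ℂ V →
        ∀ v : V, ¬ IsFullSpark (fun g : K ⋊[H.subtype] H => π g v) :=
  sparkDeficient_semidirect_of_fixed_central_general K H n hn1 hnZ hfix
end

section
/- Let L ≥ 1, let 0 ≤ λ_0 < λ_1 < ⋯ < λ_{L−1} and 0 ≤ ξ_0 < ξ_1 < ⋯ < ξ_{L−1} be strictly increasing sequences of nonnegative integers, and let z be a complex number transcendental over ℚ. Then the L × L generalized Vandermonde matrix (z^{λ_k ξ_j})_{0 ≤ j,k ≤ L−1} has nonzero determinant; moreover, for every real number t > 1 the matrix (t^{λ_k ξ_j})_{0 ≤ j,k ≤ L−1} has nonzero determinant. -/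
/-!
If the real matrix `(t ^ (λ_k ξ_j))` with `t > 0`, `t ≠ 1` were singular, a nonzero vector `c`
in its kernel would give a polynomial `∑ c_k X ^ λ_k` with at most `L` terms vanishing at the `L`
distinct positive points `t ^ ξ_j`; by Descartes' rule of signs such a polynomial has at most
`L - 1` positive roots. Over `ℂ`, the determinant is the value at `z` of the rational polynomial
`det (X ^ (λ_k ξ_j))`, which is nonzero because its value at `2` is; so it cannot vanish at a
transcendental `z`.
-/

open Finset Polynomial

namespace Polynomial

theorem signVariations_lt_card_support {R : Type*} [Semiring R] [LinearOrder R] {P : R[X]}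
    (hP : P ≠ 0) : P.signVariations < #P.support := by
  induction hn : #P.support generalizing P with
  | zero => simp_all
  | succ n ih =>
    by_cases hE : P.eraseLead = 0
    · rw [← eraseLead_add_monomial_natDegree_leadingCoeff P, hE, zero_add,
        signVariations_monomial]
      exact n.succ_pos
    · have := ih hE (card_support_eraseLead' hn)
      have := P.signVariations_le_eraseLead_succ
      omega

theorem card_lt_card_support_of_isRoot_pos {R : Type*} [CommRing R] [LinearOrder R]
    [IsStrictOrderedRing R] {P : R[X]} (hP : P ≠ 0) (s : Finset R) (hpos : ∀ x ∈ s, 0 < x)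
    (hroot : ∀ x ∈ s, P.IsRoot x) : #s < #P.support := by
  have hs : s.val ≤ P.roots.filter (0 < ·) :=
    (Multiset.le_iff_subset s.nodup).2 fun x hx =>
      Multiset.mem_filter.2 ⟨(mem_roots hP).2 (hroot x hx), hpos x hx⟩
  calc #s ≤ P.roots.countP (0 < ·) := by
        rw [Multiset.countP_eq_card_filter]
        exact Multiset.card_le_card hs
    _ ≤ P.signVariations := roots_countP_pos_le_signVariations P
    _ < #P.support := signVariations_lt_card_support hP

section SumMonomial

variable {R ι : Type*} [Semiring R] [Fintype ι]

theorem coeff_sum_monomial_of_injective {e : ι → ℕ} (he : e.Injective) (c : ι → R) (i : ι) :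
    (∑ k, monomial (e k) (c k)).coeff (e i) = c i := by
  rw [finsetSum_coeff, sum_eq_single i (fun k _ hk => by simp [coeff_monomial, he.ne hk])
    (by simp)]
  simp

theorem card_support_sum_monomial_le (e : ι → ℕ) (c : ι → R) :
    #(∑ k, monomial (e k) (c k)).support ≤ Fintype.card ι :=
  calc #(∑ k, monomial (e k) (c k)).support ≤ #(univ.image e) := by
        refine card_le_card fun n hn => ?_
        rw [mem_support_iff, finsetSum_coeff] at hn
        obtain ⟨k, -, hk⟩ := exists_ne_zero_of_sum_ne_zero hn
        rw [coeff_monomial] at hk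
        exact mem_image.2 ⟨k, mem_univ k, by_contra fun h => hk (if_neg h)⟩
    _ ≤ Fintype.card ι := card_image_le

end SumMonomial

end Polynomial

namespace Matrix

variable {ι : Type*} [Fintype ι] [DecidableEq ι]

theorem det_of_pow_eq_aeval {R A : Type*} [CommRing R] [CommRing A] [Algebra R A]
    (f : ι → ι → ℕ) (x : A) :
    (of fun j k => x ^ f j k).det = aeval x (of fun j k => (X : R[X]) ^ f j k).det := by
  rw [AlgHom.map_det]
  congr 1
  ext j k
  simp

theorem det_of_pow_mul_ne_zero {R : Type*} [Field R] [LinearOrder R] [IsStrictOrderedRing R]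
    {lam ξ : ι → ℕ} (hlam : lam.Injective) (hξ : ξ.Injective) {t : R} (ht₀ : 0 < t)
    (ht₁ : t ≠ 1) : (of fun j k => t ^ (lam k * ξ j)).det ≠ 0 := by
  intro hdet
  obtain ⟨c, hc, hMc⟩ := exists_mulVec_eq_zero_iff.2 hdet
  set P : R[X] := ∑ k, monomial (lam k) (c k)
  have hP : P ≠ 0 := by
    obtain ⟨k, hk⟩ := Function.ne_iff.1 hc
    refine ne_of_apply_ne (coeff · (lam k)) ?_
    simpa [P, coeff_sum_monomial_of_injective hlam] using hk
  have hnodes : (fun j => t ^ ξ j).Injective := (pow_right_injective₀ ht₀ ht₁).comp hξ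
  have hroot : ∀ x ∈ univ.image (fun j => t ^ ξ j), P.IsRoot x := by
    simp only [mem_image, mem_univ, true_and, forall_exists_index, forall_apply_eq_imp_iff]
    intro j
    simpa [P, IsRoot, eval_finsetSum, mulVec, dotProduct, ← pow_mul, mul_comm (ξ j),
      mul_comm (c _)] using congrFun hMc j
  have hcard := card_lt_card_support_of_isRoot_pos hP _ (by simp [ht₀]) hroot
  rw [card_image_of_injective _ hnodes, card_univ] at hcard
  exact (hcard.trans_le (card_support_sum_monomial_le lam c)).false

end Matrix

theorem generalized_vandermonde_det_ne_zero_general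
    (L : ℕ)
    (lam ξ : Fin L → ℕ) (hlam : StrictMono lam) (hξ : StrictMono ξ)
    (z : ℂ) (hz : Transcendental ℚ z) :
    (Matrix.of fun j k : Fin L => z ^ (lam k * ξ j)).det ≠ 0 ∧
      ∀ t : ℝ, 1 < t →
        (Matrix.of fun j k : Fin L => t ^ (lam k * ξ j)).det ≠ 0 := by
  have hreal {t : ℝ} (ht : 1 < t) : (Matrix.of fun j k : Fin L => t ^ (lam k * ξ j)).det ≠ 0 :=
    Matrix.det_of_pow_mul_ne_zero hlam.injective hξ.injective (by linarith) ht.ne'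
  refine ⟨fun hdet => hz ⟨(Matrix.of fun j k : Fin L => (X : ℚ[X]) ^ (lam k * ξ j)).det,
    fun h => hreal one_lt_two ?_, ?_⟩, fun t => hreal⟩
  · rw [Matrix.det_of_pow_eq_aeval (R := ℚ), h, map_zero]
  · rwa [← Matrix.det_of_pow_eq_aeval]

/-- For strictly increasing sequences of nonnegative integers
`λ₀ < ⋯ < λ_{L−1}` and `ξ₀ < ⋯ < ξ_{L−1}`, and `z ∈ ℂ` transcendental over `ℚ`, the
generalized Vandermonde matrix `(z^{λ_k ξ_j})` has nonzero determinant; moreover for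
every real `t > 1` the matrix `(t^{λ_k ξ_j})` has nonzero determinant. -/
theorem generalized_vandermonde_det_ne_zero
    (L : ℕ) (hL : 1 ≤ L)
    (lam ξ : Fin L → ℕ) (hlam : StrictMono lam) (hξ : StrictMono ξ)
    (z : ℂ) (hz : Transcendental ℚ z) :
    (Matrix.of fun j k : Fin L => z ^ (lam k * ξ j)).det ≠ 0 ∧
      ∀ t : ℝ, 1 < t →
        (Matrix.of fun j k : Fin L => t ^ (lam k * ξ j)).det ≠ 0 :=
  generalized_vandermonde_det_ne_zero_general L lam ξ hlam hξ z hz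
end

section
/- Let N be an odd integer with N ≥ 3, let H = {1, −1} ⊆ (ℤ/Nℤ)^×, let m be an integer with gcd(m, N) = 1, and let π be the unitary representation of G = ℤ_N ⋊ H on ℂ^H (the space of functions H → ℂ) defined by (π(x,s)f)(h) = e^{2πi m h^{−1} x / N} · f(s^{−1}h). Then there exists a vector v ∈ ℂ^H such that the family of 2N vectors (π(g)v)_{g∈G} is full spark: every 2 of them are linearly independent. -/
open scoped InnerProductSpace

/-!
Take `v = (1, 2)` on `H = {1, -1}` and compare two orbit vectors `π(x₁,s₁)v`, `π(x₂,s₂)v` through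
their `2 × 2` minor at the points `1, -1`. Writing `ψ = e^{2πi m · /N}`, the minor is
`ψ(x₁ - x₂) a - ψ(x₂ - x₁) b` with `a, b` products of entries of `v`. If `s₁ = s₂` then
`a = b = 2` and the minor vanishes only when `ψ(2(x₁ - x₂)) = 1`, i.e. `x₁ = x₂`, because `2m`
is a unit mod the odd number `N`. If `s₁ ≠ s₂` then `{a, b} = {1, 4}`, and two terms of
different moduli cannot cancel.
-/

theorem IsFullSpark.of_finrank_eq_two {ι V : Type*} [AddCommGroup V] [Module ℂ V] {v : ι → V}
    (hV : Module.finrank ℂ V = 2) (hv : ∀ i j, i ≠ j → LinearIndepOn ℂ v {i, j}) :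
    IsFullSpark v := by
  classical
  intro s hs
  obtain ⟨i, j, hij, rfl⟩ := Finset.card_eq_two.mp (hs.trans hV)
  have hij' : LinearIndepOn ℂ v ↑({i, j} : Finset ι) := by simpa using hv i j hij
  exact hij'

theorem linearIndepOn_pair_of_minor_ne_zero {ι α K : Type*} [Field K] {f : ι → α → K}
    {i j : ι} (hij : i ≠ j) (p q : α) (hf : f i p * f j q ≠ f j p * f i q) :
    LinearIndepOn K f {i, j} := by
  rw [LinearIndepOn.pair_iff f hij]
  intro c d hcd
  have hp := congrFun hcd p
  have hq := congrFun hcd q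
  simp only [Pi.add_apply, Pi.smul_apply, smul_eq_mul, Pi.zero_apply] at hp hq
  have hminor : f i p * f j q - f j p * f i q ≠ 0 := sub_ne_zero.mpr hf
  constructor
  · exact (mul_eq_zero.mp (by linear_combination f j q * hp - f j p * hq :
      c * (f i p * f j q - f j p * f i q) = 0)).resolve_right hminor
  · exact (mul_eq_zero.mp (by linear_combination f i p * hq - f i q * hp :
      d * (f i p * f j q - f j p * f i q) = 0)).resolve_right hminor

theorem Subgroup.mem_zpowers_neg_one_iff {G : Type*} [Group G] [HasDistribNeg G] {g : G} :
    g ∈ Subgroup.zpowers (-1 : G) ↔ g = 1 ∨ g = -1 := by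
  refine ⟨fun ⟨k, hk⟩ => ?_, ?_⟩
  · rw [← hk]
    simp only [neg_one_zpow_eq_ite]
    split_ifs <;> simp
  · rintro (rfl | rfl)
    exacts [one_mem _, mem_zpowers _]

theorem Subgroup.card_zpowers_neg_one {G : Type*} [Group G] [HasDistribNeg G] (h : (-1 : G) ≠ 1) :
    Nat.card (Subgroup.zpowers (-1 : G)) = 2 := by
  rw [Nat.card_zpowers]
  exact orderOf_eq_prime (by simp) h

theorem ZMod.units_neg_one_ne_one {N : ℕ} (hN : 2 < N) : (-1 : (ZMod N)ˣ) ≠ 1 := by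
  have : Fact (2 < N) := ⟨hN⟩
  exact fun h => ZMod.neg_one_ne_one (by simpa using congrArg Units.val h)

theorem ZMod.cexp_mul_val_eq_toCircle {N : ℕ} [NeZero N] (m : ℤ) (t : ZMod N) :
    Complex.exp (2 * Real.pi * Complex.I * m * (t.val : ℂ) / N) =
      ZMod.toCircle ((m : ZMod N) * t) := by
  have : (m : ZMod N) * t = ((m * t.val : ℤ) : ZMod N) := by push_cast; simp
  rw [this, ZMod.toCircle_intCast]
  push_cast
  ring_nf

theorem ZMod.isUnit_two_mul_intCast {N : ℕ} (hN : Odd N) {m : ℤ} (hm : Int.gcd m N = 1) :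
    IsUnit (2 * (m : ZMod N)) := by
  refine IsUnit.mul ?_ ?_
  · exact_mod_cast (ZMod.isUnit_iff_coprime 2 N).mpr (Nat.coprime_two_left.mpr hN)
  · rw [ZMod.coe_int_isUnit_iff_isCoprime, isCoprime_comm, Int.isCoprime_iff_gcd_eq_one]
    exact hm

theorem ZMod.toCircle_mul_toCircle_neg_ne {N : ℕ} [NeZero N] {c x y : ZMod N}
    (hc : IsUnit (2 * c)) (hxy : x ≠ y) :
    (toCircle (c * x) : ℂ) * toCircle (-(c * y)) ≠ toCircle (c * y) * toCircle (-(c * x)) := by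
  rw [← Circle.coe_mul, ← Circle.coe_mul, ← AddChar.map_add_eq_mul, ← AddChar.map_add_eq_mul,
    Ne, Circle.coe_inj, ZMod.injective_toCircle.eq_iff]
  intro h
  exact hxy (sub_eq_zero.mp (hc.mul_right_eq_zero.mp (by linear_combination h)))

local notation "𝐇[" N "]" => Subgroup.zpowers (-1 : (ZMod N)ˣ)
local notation "𝐆[" N "]" => Multiplicative (ZMod N) ⋊[zmodAut N 𝐇[N]] 𝐇[N]

section

variable {N : ℕ}

def signWeight (h : 𝐇[N]) : ℂ := if (h : (ZMod N)ˣ) = 1 then 1 else 2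

variable [NeZero N]

theorem linearIndepOn_pair_of_eq_toCircle_mul_signWeight (hN : 2 < N) {c : ZMod N}
    (hc : IsUnit (2 * c)) {u : 𝐆[N] → 𝐇[N] → ℂ}
    (hu : ∀ g h, u g h = ZMod.toCircle (c * ((((h⁻¹ : 𝐇[N]) : (ZMod N)ˣ) : ZMod N) *
      Multiplicative.toAdd g.left)) * signWeight (g.right⁻¹ * h))
    {g₁ g₂ : 𝐆[N]} (hne : g₁ ≠ g₂) : LinearIndepOn ℂ u {g₁, g₂} := by
  have hneg := ZMod.units_neg_one_ne_one hN
  refine linearIndepOn_pair_of_minor_ne_zero hne 1 ⟨-1, Subgroup.mem_zpowers _⟩ ?_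
  obtain ⟨x₁, s₁, hs₁⟩ := g₁
  obtain ⟨x₂, s₂, hs₂⟩ := g₂
  have hx : s₁ = s₂ → Multiplicative.toAdd x₁ ≠ Multiplicative.toAdd x₂ := by
    rintro rfl h
    exact hne (by rw [show x₁ = x₂ from h])
  simp only [hu, signWeight, Subgroup.coe_mul, Subgroup.coe_inv]
  rcases Subgroup.mem_zpowers_neg_one_iff.mp hs₁ with rfl | rfl <;>
    rcases Subgroup.mem_zpowers_neg_one_iff.mp hs₂ with rfl | rfl <;>
    simp only [OneMemClass.coe_one, inv_one, Units.val_one, one_mul, mul_one, ↓reduceIte, inv_neg,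
      Units.val_neg, neg_mul, mul_neg, neg_neg, hneg, ne_eq]
  · exact fun h => ZMod.toCircle_mul_toCircle_neg_ne hc (hx rfl) (by linear_combination h / 2)
  -- for different signs the two sides have moduli 1 and 4
  iterate 2
    intro h
    have := congrArg norm h
    norm_num [Circle.norm_coe] at this
  · exact fun h => ZMod.toCircle_mul_toCircle_neg_ne hc (hx rfl) (by linear_combination h / 2)

end

/-- For `N` odd, `N ≥ 3`, `H = {1, −1} ⊆ (ℤ/Nℤ)ˣ` (the subgroup
generated by `−1`), and `gcd(m,N) = 1`, the unitary representation `π` of `G = ℤ_N ⋊ H`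
on `ℂ^H` given by `(π(x,s)f)(h) = e^{2πi m h⁻¹x/N} f(s⁻¹h)` is full spark: there is a
vector `v` whose orbit of `2N` vectors is full spark (every `2` of them are linearly
independent). -/
theorem fullSpark_induced_rep_of_odd
    (N : ℕ) [NeZero N] (hN3 : 3 ≤ N) (hNodd : Odd N)
    (m : ℤ) (hm : Int.gcd m (N : ℤ) = 1)
    (π : (Multiplicative (ZMod N)
          ⋊[zmodAut N (Subgroup.zpowers (-1 : (ZMod N)ˣ))]
          (Subgroup.zpowers (-1 : (ZMod N)ˣ))) →*
        ((Subgroup.zpowers (-1 : (ZMod N)ˣ) → ℂ) →ₗ[ℂ]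
          (Subgroup.zpowers (-1 : (ZMod N)ˣ) → ℂ)))
    (hπ : ∀ (x : ZMod N) (s : Subgroup.zpowers (-1 : (ZMod N)ˣ))
        (f : Subgroup.zpowers (-1 : (ZMod N)ˣ) → ℂ)
        (h : Subgroup.zpowers (-1 : (ZMod N)ˣ)),
      π ⟨Multiplicative.ofAdd x, s⟩ f h =
        Complex.exp (2 * Real.pi * Complex.I * (m : ℂ) *
            ((((((h⁻¹ : Subgroup.zpowers (-1 : (ZMod N)ˣ)) : (ZMod N)ˣ) : ZMod N)
              * x).val : ℂ)) / (N : ℂ)) *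
          f (s⁻¹ * h)) :
    ∃ v : Subgroup.zpowers (-1 : (ZMod N)ˣ) → ℂ,
      IsFullSpark (fun g : Multiplicative (ZMod N)
          ⋊[zmodAut N (Subgroup.zpowers (-1 : (ZMod N)ˣ))]
          (Subgroup.zpowers (-1 : (ZMod N)ˣ)) => π g v) := by
  have hN : 2 < N := hN3
  have hrank : Module.finrank ℂ (𝐇[N] → ℂ) = 2 := by
    have := Fintype.ofFinite 𝐇[N]
    rw [Module.finrank_pi, Fintype.card_eq_nat_card,
      Subgroup.card_zpowers_neg_one (ZMod.units_neg_one_ne_one hN)]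
  refine ⟨signWeight, IsFullSpark.of_finrank_eq_two hrank fun g₁ g₂ hne => ?_⟩
  refine linearIndepOn_pair_of_eq_toCircle_mul_signWeight hN
    (ZMod.isUnit_two_mul_intCast hNodd hm) (fun g h => ?_) hne
  rw [← ZMod.cexp_mul_val_eq_toCircle]
  exact hπ _ _ _ _
end

section
/- Let N ≥ 2 be a positive integer, let H be a non-cyclic subgroup of (ℤ/Nℤ)^×, let m be an integer with gcd(m, N) = 1, and let π be the unitary representation of G = ℤ_N ⋊ H on ℂ^H (the space of functions H → ℂ) defined by (π(x,s)f)(h) = e^{2πi m h^{−1} x / N} · f(s^{−1}h). Then π is spark deficient: for every v ∈ ℂ^H, the family (π(g)v)_{g∈G} is not full spark. -/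
/-!
Let `p` be a prime divisor of `N`. Since `(ℤ/pℤ)ˣ` is cyclic and `H` is not, reduction mod `p`
is not injective on `H`. On the translations by multiples of `N/p` the representation is
diagonal, `π (j·N/p, 1) v = z ^ j * v` with `z h = exp (2πi m h⁻¹ (N/p) / N)`, and `z` factors
through `h ↦ h⁻¹ mod p ∈ (ℤ/pℤ)ˣ`; hence `z` takes `k` values with `k < |H|`, `k < p`.
The coefficients of the monic polynomial of degree `k` vanishing at those values give a linear
relation among the `k + 1` distinct vectors `π (j·N/p, 1) v`, `0 ≤ j ≤ k`, and any
`|H| = dim ℂ^H` vectors of the orbit containing them are dependent.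
-/

open Finset Polynomial

theorem IsFullSpark.linearIndependent_comp_s19 {ι κ V : Type*} [Fintype ι] [Fintype κ]
    [AddCommGroup V] [Module ℂ V] {u : ι → V} (hu : IsFullSpark u) {f : κ → ι}
    (hf : Function.Injective f) (hκ : Fintype.card κ ≤ Module.finrank ℂ V)
    (hι : Module.finrank ℂ V ≤ Fintype.card ι) : LinearIndependent ℂ (u ∘ f) := by
  classical
  obtain ⟨s, hfs, hs⟩ := exists_superset_card_eq
    ((card_image_of_injective univ hf).trans_le hκ) hι
  exact (hu s hs).comp (fun k ↦ ⟨f k, hfs (mem_image_of_mem f (mem_univ k))⟩)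
    fun a b hab ↦ hf (congrArg Subtype.val hab)

theorem not_linearIndependent_pow_mul {ι K : Type*} [Fintype ι] [Field K] [DecidableEq K]
    (z v : ι → K) :
    ¬ LinearIndependent K
      (fun j : Fin (#(univ.image z) + 1) ↦ fun i ↦ z i ^ (j : ℕ) * v i) := by
  set P := Lagrange.nodal (univ.image z) id
  have hdeg : P.natDegree = #(univ.image z) := Lagrange.natDegree_nodal
  rw [Fintype.linearIndependent_iff]
  push Not
  refine ⟨fun j ↦ P.coeff j, ?_, Fin.last _, ?_⟩
  · funext i
    have hroot : P.eval (z i) = 0 :=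
      Lagrange.eval_nodal_at_node (v := id) (mem_image_of_mem z (mem_univ i))
    simp only [Finset.sum_apply, Pi.smul_apply, smul_eq_mul, Pi.zero_apply, ← mul_assoc,
      ← Finset.sum_mul]
    rw [Fin.sum_univ_eq_sum_range (fun j ↦ P.coeff j * z i ^ j),
      ← eval_eq_sum_range' (by omega), hroot, zero_mul]
  · change P.coeff _ ≠ 0
    rw [Fin.val_last, ← hdeg, coeff_natDegree, Lagrange.nodal_monic.leadingCoeff]
    exact one_ne_zero

theorem MonoidHom.card_image_comp_lt {G M₀ β : Type*} [Group G] [Fintype G]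
    [MonoidWithZero M₀] [Nontrivial M₀] [Fintype M₀] [DecidableEq M₀] [DecidableEq β]
    (φ : G →* M₀) (w : M₀ → β) (hφ : ¬ Function.Injective φ) :
    #(univ.image (w ∘ φ)) < Fintype.card G ∧ #(univ.image (w ∘ φ)) < Fintype.card M₀ := by
  have hwφ : #(univ.image (w ∘ φ)) ≤ #(univ.image φ) := by
    rw [← image_image]
    exact card_image_le
  have hG : #(univ.image φ) < Fintype.card G := card_image_le.lt_of_ne fun h ↦
    hφ (Set.injOn_univ.mp (by simpa using card_image_iff.mp h))
  have hM₀ : #(univ.image φ) < Fintype.card M₀ := by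
    refine (card_le_card fun x hx ↦ ?_).trans_lt (card_erase_lt_of_mem (mem_univ (0 : M₀)))
    obtain ⟨g, -, rfl⟩ := mem_image.mp hx
    exact mem_erase.mpr ⟨((Group.isUnit g).map φ).ne_zero, mem_univ _⟩
  omega

theorem ZMod.mul_natCast_div_eq_val_castHom_mul {N p : ℕ} [NeZero N] (hp : p ∣ N)
    (b : ZMod N) :
    b * ((N / p : ℕ) : ZMod N) =
      ((castHom hp (ZMod p) b).val : ZMod N) * ((N / p : ℕ) : ZMod N) := by
  rw [← natCast_zmod_val b, map_natCast, val_natCast]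
  conv_lhs => rw [← Nat.div_add_mod b.val p]
  rw [Nat.cast_add, add_mul, Nat.cast_mul, mul_comm (p : ZMod N), mul_assoc, ← Nat.cast_mul,
    Nat.mul_div_cancel' hp, natCast_self, mul_zero, zero_add]

theorem ZMod.natCast_mul_div_injOn {N p : ℕ} [NeZero N] (hp : p ∣ N) :
    Set.InjOn (fun j : ℕ ↦ (j : ZMod N) * ((N / p : ℕ) : ZMod N)) (Set.Iio p) := by
  intro i hi j hj hij
  have hpos : 0 < N / p := Nat.div_pos (Nat.le_of_dvd (NeZero.pos N) hp) (by simp at hi; omega)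
  have hlt : ∀ k < p, k * (N / p) < N := fun k hk ↦
    (Nat.mul_lt_mul_of_pos_right hk hpos).trans_eq (Nat.mul_div_cancel' hp)
  simp only [← Nat.cast_mul] at hij
  have := congrArg val hij
  rw [val_natCast_of_lt (hlt i hi), val_natCast_of_lt (hlt j hj)] at this
  exact Nat.eq_of_mul_eq_mul_right hpos this

theorem ZMod.stdAddChar_intCast_mul {N : ℕ} [NeZero N] (m : ℤ) (y : ZMod N) :
    stdAddChar ((m : ZMod N) * y) =
      Complex.exp (2 * Real.pi * Complex.I * m * (y.val : ℂ) / N) := by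
  have : (m : ZMod N) * y = ((m * y.val : ℤ) : ZMod N) := by
    rw [Int.cast_mul, Int.cast_natCast, natCast_zmod_val]
  rw [this, stdAddChar_coe]
  push_cast
  ring_nf

theorem ZMod.exp_val_mul_natCast_mul_div {N p : ℕ} [NeZero N] (hp : p ∣ N) (m : ℤ)
    (b : ZMod N) (j : ℕ) :
    Complex.exp (2 * Real.pi * Complex.I * m *
        ((b * ((j : ZMod N) * ((N / p : ℕ) : ZMod N))).val : ℂ) / N) =
      stdAddChar ((m : ZMod N) *
        (((castHom hp (ZMod p) b).val : ZMod N) * ((N / p : ℕ) : ZMod N))) ^ j := by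
  rw [← stdAddChar_intCast_mul, ← AddChar.map_nsmul_eq_pow,
    ← mul_natCast_div_eq_val_castHom_mul hp b, nsmul_eq_mul]
  congr 1
  ring

theorem sparkDeficient_induced_rep_of_noncyclic_general
    (N : ℕ) (hN : 2 ≤ N)
    (H : Subgroup (ZMod N)ˣ) (hH : ¬ IsCyclic H)
    (m : ℤ)
    (π : (Multiplicative (ZMod N) ⋊[zmodAut N H] H) →* ((H → ℂ) →ₗ[ℂ] (H → ℂ)))
    (hπ : ∀ (x : ZMod N) (s : H) (f : H → ℂ) (h : H),
      π ⟨Multiplicative.ofAdd x, s⟩ f h =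
        Complex.exp (2 * Real.pi * Complex.I * (m : ℂ) *
            ((((((h⁻¹ : H) : (ZMod N)ˣ) : ZMod N) * x).val : ℂ)) / (N : ℂ)) *
          f (s⁻¹ * h)) :
    ∀ v : H → ℂ,
      ¬ IsFullSpark (fun g : Multiplicative (ZMod N) ⋊[zmodAut N H] H => π g v) := by
  classical
  intro v hfull
  have : NeZero N := ⟨by omega⟩
  let : Fintype (Multiplicative (ZMod N) ⋊[zmodAut N H] H) :=
    Fintype.ofEquiv _ SemidirectProduct.equivProd.symm
  obtain ⟨p, hp, hpN⟩ := Nat.exists_prime_and_dvd (show N ≠ 1 by omega)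
  have : Fact p.Prime := ⟨hp⟩
  set φ : H →* ZMod p := (ZMod.castHom hpN (ZMod p)).toMonoidHom.comp
    ((Units.coeHom _).comp (H.subtype.comp invMonoidHom))
  set w : ZMod p → ℂ :=
    fun r ↦ ZMod.stdAddChar ((m : ZMod N) * ((r.val : ZMod N) * ((N / p : ℕ) : ZMod N)))
  set k := #(univ.image (w ∘ φ))
  obtain ⟨hkH, hkp⟩ := φ.card_image_comp_lt w (mt (isCyclic_of_injective_ringHom φ) hH)
  rw [ZMod.card] at hkp
  set e : Fin (k + 1) → Multiplicative (ZMod N) ⋊[zmodAut N H] H :=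
    fun j ↦ ⟨.ofAdd (((j : ℕ) : ZMod N) * ((N / p : ℕ) : ZMod N)), 1⟩
  have he : Function.Injective e := fun a b hab ↦ Fin.ext <|
    ZMod.natCast_mul_div_injOn hpN (by simp; omega) (by simp; omega)
      (congrArg (fun g ↦ g.left.toAdd) hab)
  have hπe :
      (fun g ↦ π g v) ∘ e = fun (j : Fin (k + 1)) h ↦ (w ∘ φ) h ^ (j : ℕ) * v h := by
    funext j h
    rw [Function.comp_apply, hπ, inv_one, one_mul, ZMod.exp_val_mul_natCast_mul_div hpN]
    rfl
  refine not_linearIndependent_pow_mul (w ∘ φ) v ?_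
  rw [← hπe]
  refine hfull.linearIndependent_comp_s19 he ?_ ?_
  · rw [Fintype.card_fin, Module.finrank_fintype_fun_eq_card]
    exact hkH
  · rw [Module.finrank_fintype_fun_eq_card]
    exact Fintype.card_le_of_injective _ SemidirectProduct.inr_injective

/-- For `N ≥ 2`, `H` a non-cyclic subgroup of `(ℤ/Nℤ)ˣ`, and
`gcd(m,N) = 1`, the unitary representation `π` of `G = ℤ_N ⋊ H` on `ℂ^H` given by
`(π(x,s)f)(h) = e^{2πi m h⁻¹x/N} f(s⁻¹h)` is spark deficient. -/
theorem sparkDeficient_induced_rep_of_noncyclic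
    (N : ℕ) [NeZero N] (hN : 2 ≤ N)
    (H : Subgroup (ZMod N)ˣ) (hH : ¬ IsCyclic H)
    (m : ℤ) (hm : Int.gcd m (N : ℤ) = 1)
    (π : (Multiplicative (ZMod N) ⋊[zmodAut N H] H) →* ((H → ℂ) →ₗ[ℂ] (H → ℂ)))
    (hπ : ∀ (x : ZMod N) (s : H) (f : H → ℂ) (h : H),
      π ⟨Multiplicative.ofAdd x, s⟩ f h =
        Complex.exp (2 * Real.pi * Complex.I * (m : ℂ) *
            ((((((h⁻¹ : H) : (ZMod N)ˣ) : ZMod N) * x).val : ℂ)) / (N : ℂ)) *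
          f (s⁻¹ * h)) :
    ∀ v : H → ℂ,
      ¬ IsFullSpark (fun g : Multiplicative (ZMod N) ⋊[zmodAut N H] H => π g v) :=
  sparkDeficient_induced_rep_of_noncyclic_general N hN H hH m π hπ
end
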